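/- arXiv:math/0402183 — 8 statements merged into one kernel-verified Lean document; each statement's English description precedes it below -/
import Mathlib

section
/- For ρ > 0, the function K_ρ(u) = u·log(ρu/(1 − e^{−ρu})) − ρu²/2 on (0,1] satisfies K_ρ(u) < 0 for all u ∈ (0,1], K_ρ(u) → 0 as u → 0⁺, and K_ρ is strictly decreasing in u on (0,1]. -/
/-!
Put `x = ρu/2`. Since `1 - e^{-2x} = 2e^{-x} sinh x`, the rate function rewrites as
`K_ρ(u) = -u · log (sinh x / x)`. The strict convexity of `sinh` on `[0, ∞)` makes the secant
slope `sinh x / x` strictly increasing, and it exceeds `1` there; hence `K_ρ(u)` is minus a product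
of two positive strictly increasing functions of `u`. For the limit, `1 - e^{-t} ≤ t` makes the
logarithm in the original formula nonnegative, so `-ρu²/2 ≤ K_ρ(u) < 0`.
-/

open Real Set Filter

lemma Real.strictConvexOn_sinh : StrictConvexOn ℝ (Ici 0) sinh := by
  refine strictConvexOn_of_deriv2_pos (convex_Ici 0) continuous_sinh.continuousOn fun x hx => ?_
  rw [interior_Ici, mem_Ioi] at hx
  simpa [Real.deriv_sinh, Real.deriv_cosh] using sinh_pos_iff.2 hx

lemma Real.strictMonoOn_sinh_div_self : StrictMonoOn (fun x => sinh x / x) (Ioi 0) :=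
  fun x hx y hy hxy => by
    simpa using strictConvexOn_sinh.secant_strict_mono (a := 0) (mem_Ici.2 le_rfl)
      (mem_Ici.2 (le_of_lt hx)) (mem_Ici.2 (le_of_lt hy)) (ne_of_gt hx) (ne_of_gt hy) hxy

lemma Real.one_lt_sinh_div_self {x : ℝ} (hx : 0 < x) : 1 < sinh x / x :=
  (one_lt_div hx).2 (self_lt_sinh_iff.2 hx)

lemma Real.log_sinh_div_self_pos {x : ℝ} (hx : 0 < x) : 0 < log (sinh x / x) :=
  log_pos (one_lt_sinh_div_self hx)

lemma Real.strictMonoOn_log_sinh_div_self : StrictMonoOn (fun x => log (sinh x / x)) (Ioi 0) :=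
  fun _ hx _ hy hxy =>
    log_lt_log (zero_lt_one.trans (one_lt_sinh_div_self hx)) (strictMonoOn_sinh_div_self hx hy hxy)

lemma Real.one_le_div_one_sub_exp_neg {t : ℝ} (ht : 0 < t) : 1 ≤ t / (1 - exp (-t)) :=
  (one_le_div (sub_pos.2 (exp_lt_one_iff.2 (neg_neg_of_pos ht)))).2
    (by linarith [add_one_le_exp (-t)])

lemma Real.two_mul_div_one_sub_exp_neg (x : ℝ) :
    2 * x / (1 - exp (-(2 * x))) = exp x / (sinh x / x) := by
  have hden : 1 - exp (-(2 * x)) = 2 * exp (-x) * sinh x := by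
    rw [sinh_eq, show -(2 * x) = -x + -x by ring, exp_add, exp_neg]
    field_simp
  rw [hden, exp_neg]
  field_simp

lemma rate_eq_neg_mul_log_sinh_div {ρ u : ℝ} (h : 0 < ρ * u) :
    u * log (ρ * u / (1 - exp (-(ρ * u)))) - ρ * u ^ 2 / 2
      = -(u * log (sinh (ρ * u / 2) / (ρ * u / 2))) := by
  set x := ρ * u / 2 with hx_def
  have hx : 0 < x := by positivity
  rw [show ρ * u = 2 * x by ring, two_mul_div_one_sub_exp_neg x,
    log_div (exp_pos x).ne' (div_pos (sinh_pos_iff.2 hx) hx).ne', log_exp]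
  linear_combination u * hx_def

/-- For `ρ > 0`, `K_ρ(u) = u·log(ρu/(1 − e^{−ρu})) − ρu²/2` is negative on
`(0,1]`, tends to `0` as `u → 0⁺`, and is strictly decreasing on `(0,1]`. -/
theorem stmt_6 (ρ : ℝ) (hρ : 0 < ρ) (K : ℝ → ℝ)
    (hK : ∀ u : ℝ, 0 < u →
      K u = u * Real.log (ρ * u / (1 - Real.exp (-(ρ * u)))) - ρ * u ^ 2 / 2) :
    (∀ u ∈ Set.Ioc (0 : ℝ) 1, K u < 0) ∧
    Filter.Tendsto K (nhdsWithin 0 (Set.Ioi (0 : ℝ))) (nhds 0) ∧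
    StrictAntiOn K (Set.Ioc (0 : ℝ) 1) := by
  have hKL : ∀ u, 0 < u → K u = -(u * log (sinh (ρ * u / 2) / (ρ * u / 2))) := fun u hu => by
    rw [hK u hu, rate_eq_neg_mul_log_sinh_div (mul_pos hρ hu)]
  have hneg : ∀ u, 0 < u → K u < 0 := fun u hu => by
    rw [hKL u hu, neg_lt_zero]
    exact mul_pos hu (log_sinh_div_self_pos (half_pos (mul_pos hρ hu)))
  have hlower : ∀ u, 0 < u → -(ρ * u ^ 2 / 2) ≤ K u := fun u hu => by
    have := mul_nonneg hu.le (log_nonneg (one_le_div_one_sub_exp_neg (mul_pos hρ hu)))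
    rw [hK u hu]; linarith
  refine ⟨fun u hu => hneg u hu.1, ?_, ?_⟩
  · have hquad : Tendsto (fun u : ℝ => -(ρ * u ^ 2 / 2)) (nhdsWithin 0 (Ioi 0)) (nhds 0) := by
      refine tendsto_nhdsWithin_of_tendsto_nhds ((?_ : Continuous _).tendsto' 0 0 (by simp))
      fun_prop
    exact tendsto_of_tendsto_of_tendsto_of_le_of_le' hquad tendsto_const_nhds
      (eventually_nhdsWithin_of_forall hlower)
      (eventually_nhdsWithin_of_forall fun u hu => (hneg u hu).le)
  · intro a ha b hb hab
    have hxa : 0 < ρ * a / 2 := half_pos (mul_pos hρ ha.1)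
    have hxb : 0 < ρ * b / 2 := half_pos (mul_pos hρ hb.1)
    rw [hKL a ha.1, hKL b hb.1, neg_lt_neg_iff]
    exact mul_lt_mul'' hab (strictMonoOn_log_sinh_div_self hxa hxb (by gcongr)) ha.1.le
      (log_sinh_div_self_pos hxa).le
end

section
/- For ρ > 0, the function K_ρ(u) = u·log(ρu/(1 − e^{−ρu})) − ρu²/2 is strictly concave in u on (0,1], and consequently subadditive: K_ρ(u + v) ≤ K_ρ(u) + K_ρ(v) for all u, v > 0 with u + v ≤ 1. In particular, for any sequence u_1, u_2, … ≥ 0 with ∑ u_i ≤ 1 one has ∑_i K_ρ(u_i) ≥ K_ρ(∑_i u_i). -/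
open Real Set

/-- `sinh s < s * cosh s` for `s > 0`. -/
lemma stmt7_sinh_lt (s : ℝ) (hs : 0 < s) : Real.sinh s < s * Real.cosh s := by
  have hmono : StrictMonoOn (fun x : ℝ => x * Real.cosh x - Real.sinh x) (Set.Ici 0) := by
    apply strictMonoOn_of_deriv_pos (convex_Ici 0)
    · exact ((continuous_id.mul Real.continuous_cosh).sub Real.continuous_sinh).continuousOn
    · intro x hx
      rw [interior_Ici] at hx
      have h1 : HasDerivAt (fun x : ℝ => x * Real.cosh x - Real.sinh x) (x * Real.sinh x) x := by
        have := ((hasDerivAt_id x).mul (Real.hasDerivAt_cosh x)).sub (Real.hasDerivAt_sinh x)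
        refine this.congr_deriv ?_; simp only [id_eq]; ring
      rw [h1.deriv]
      exact mul_pos hx (Real.sinh_pos_iff.2 hx)
  have h := hmono (Set.self_mem_Ici) (Set.mem_Ici.2 hs.le) hs
  simp only [Real.cosh_zero, Real.sinh_zero, mul_one, zero_mul, sub_zero, zero_sub, neg_zero] at h
  linarith

/-- `sinh² s + s² < 2 s sinh s cosh s` for `s > 0`. -/
lemma stmt7_key (s : ℝ) (hs : 0 < s) :
    Real.sinh s ^ 2 + s ^ 2 < 2 * s * Real.sinh s * Real.cosh s := by
  have hmono : StrictMonoOn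
      (fun x : ℝ => 2 * x * Real.sinh x * Real.cosh x - (Real.sinh x ^ 2 + x ^ 2))
      (Set.Ici 0) := by
    apply strictMonoOn_of_deriv_pos (convex_Ici 0)
    · fun_prop
    · intro x hx
      rw [interior_Ici] at hx
      have h1 : HasDerivAt
          (fun x : ℝ => 2 * x * Real.sinh x * Real.cosh x - (Real.sinh x ^ 2 + x ^ 2))
          (4 * x * Real.sinh x ^ 2) x := by
        have := ((((hasDerivAt_id x).const_mul (2:ℝ)).mul (Real.hasDerivAt_sinh x)).mul
          (Real.hasDerivAt_cosh x)).sub (((Real.hasDerivAt_sinh x).pow 2).add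
            ((hasDerivAt_id x).pow 2))
        refine this.congr_deriv ?_
        have hc := Real.cosh_sq x
        simp only [id_eq, pow_one, Pi.mul_apply]
        push_cast
        linear_combination (2*x) * hc
      rw [h1.deriv]
      have h2 := Real.sinh_pos_iff.2 hx
      have hx0 : (0:ℝ) < x := hx
      exact mul_pos (by linarith) (pow_pos h2 2)
  have h := hmono (Set.self_mem_Ici) (Set.mem_Ici.2 hs.le) hs
  simp only [Real.cosh_zero, Real.sinh_zero, mul_one, zero_mul, mul_zero] at h
  nlinarith [h]

/-- The auxiliary function `G s = log (s / sinh s)`. -/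
noncomputable def stmt7G (s : ℝ) : ℝ := Real.log s - Real.log (Real.sinh s)

lemma stmt7G_hasDeriv (s : ℝ) (hs : 0 < s) :
    HasDerivAt stmt7G (1 / s - Real.cosh s / Real.sinh s) s := by
  have h1 := Real.hasDerivAt_log hs.ne'
  have h2 := (Real.hasDerivAt_sinh s).log (Real.sinh_pos_iff.2 hs).ne'
  have h3 : HasDerivAt (fun y => Real.log y - Real.log (Real.sinh y))
      (s⁻¹ - Real.cosh s / Real.sinh s) s := h1.sub h2
  rw [one_div]; exact h3

lemma stmt7G_neg (s : ℝ) (hs : 0 < s) : stmt7G s < 0 :=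
  sub_neg.2 (Real.log_lt_log hs (Real.self_lt_sinh_iff.2 hs))

lemma stmt7G_anti : StrictAntiOn stmt7G (Set.Ioi 0) := by
  apply strictAntiOn_of_deriv_neg (convex_Ioi 0)
  · intro x hx
    exact (stmt7G_hasDeriv x hx).continuousAt.continuousWithinAt
  · intro x hx
    rw [interior_Ioi] at hx
    rw [(stmt7G_hasDeriv x hx).deriv]
    have h1 : 0 < Real.sinh x := Real.sinh_pos_iff.2 hx
    have h2 := stmt7_sinh_lt x hx
    rw [sub_neg, div_lt_div_iff₀ hx h1]
    linarith

/-- For `ρ > 0`, `K_ρ` is strictly concave on `(0,1]`, hence subadditive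
(`K_ρ(u+v) ≤ K_ρ(u) + K_ρ(v)` for `u,v > 0`, `u+v ≤ 1`), and for any
nonnegative summable sequence with `∑ u_i ≤ 1` one has
`K_ρ(∑ u_i) ≤ ∑ K_ρ(u_i)`. -/
theorem stmt_7 (ρ : ℝ) (hρ : 0 < ρ) (K : ℝ → ℝ) (hK0 : K 0 = 0)
    (hK : ∀ u : ℝ, 0 < u →
      K u = u * Real.log (ρ * u / (1 - Real.exp (-(ρ * u)))) - ρ * u ^ 2 / 2) :
    StrictConcaveOn ℝ (Set.Ioc (0 : ℝ) 1) K ∧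
    (∀ u v : ℝ, 0 < u → 0 < v → u + v ≤ 1 → K (u + v) ≤ K u + K v) ∧
    (∀ u : ℕ → ℝ, (∀ i, 0 ≤ u i) → Summable u → (∑' i, u i) ≤ 1 →
      K (∑' i, u i) ≤ ∑' i, K (u i)) := by
  -- The reduced form `K u = u * G (ρ u / 2)` for `u > 0`.
  have hKf : ∀ u : ℝ, 0 < u → K u = u * stmt7G (ρ * u / 2) := by
    intro u hu
    have hs : 0 < ρ * u / 2 := by positivity
    have hsinh : 0 < Real.sinh (ρ * u / 2) := Real.sinh_pos_iff.2 hs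
    have hexp : 1 - Real.exp (-(ρ * u)) =
        2 * Real.exp (-(ρ * u / 2)) * Real.sinh (ρ * u / 2) := by
      rw [Real.sinh_eq]
      have h1 : Real.exp (-(ρ * u / 2)) * Real.exp (ρ * u / 2) = 1 := by
        rw [← Real.exp_add]; simp
      have h2 : Real.exp (-(ρ * u / 2)) * Real.exp (-(ρ * u / 2)) = Real.exp (-(ρ * u)) := by
        rw [← Real.exp_add]; ring_nf
      nlinarith [h1, h2]
    have hpos : 0 < 2 * Real.exp (-(ρ * u / 2)) * Real.sinh (ρ * u / 2) := by
      have := Real.exp_pos (-(ρ * u / 2)); nlinarith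
    have hlog : Real.log (ρ * u / (1 - Real.exp (-(ρ * u)))) =
        Real.log (ρ * u / 2) + ρ * u / 2 - Real.log (Real.sinh (ρ * u / 2)) := by
      rw [hexp, Real.log_div (by positivity) hpos.ne',
        Real.log_mul (by positivity) hsinh.ne',
        Real.log_mul two_ne_zero (Real.exp_pos _).ne', Real.log_exp,
        Real.log_div (by positivity) two_ne_zero]
      ring
    rw [hK u hu, hlog]
    simp only [stmt7G]
    ring
  -- Derivative of `f u = u * G (ρ u / 2)`.
  have hfD : ∀ u : ℝ, 0 < u → HasDerivAt (fun u : ℝ => u * stmt7G (ρ * u / 2))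
      (stmt7G (ρ * u / 2) + 1
        - ρ * u / 2 * Real.cosh (ρ * u / 2) / Real.sinh (ρ * u / 2)) u := by
    intro u hu
    have hs : 0 < ρ * u / 2 := by positivity
    have hsinh : 0 < Real.sinh (ρ * u / 2) := Real.sinh_pos_iff.2 hs
    have hinner : HasDerivAt (fun u : ℝ => ρ * u / 2) (ρ / 2) u := by
      simpa using ((hasDerivAt_id u).const_mul ρ).div_const 2
    have hG : HasDerivAt (fun u : ℝ => stmt7G (ρ * u / 2))
        ((1 / (ρ * u / 2) - Real.cosh (ρ * u / 2) / Real.sinh (ρ * u / 2)) * (ρ / 2)) u :=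
      by have := (stmt7G_hasDeriv _ hs).comp u hinner; exact this
    have := (hasDerivAt_id u).mul hG
    refine this.congr_deriv ?_
    simp only [id_eq]
    field_simp
    ring
  -- Second derivative.
  have hfD2 : ∀ u : ℝ, 0 < u → HasDerivAt (fun u : ℝ => stmt7G (ρ * u / 2) + 1
        - ρ * u / 2 * Real.cosh (ρ * u / 2) / Real.sinh (ρ * u / 2))
      (1 / u - ρ * Real.cosh (ρ * u / 2) / Real.sinh (ρ * u / 2)
        + (ρ ^ 2 * u / 4) / Real.sinh (ρ * u / 2) ^ 2) u := by
    intro u hu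
    have hs : 0 < ρ * u / 2 := by positivity
    have hsinh : 0 < Real.sinh (ρ * u / 2) := Real.sinh_pos_iff.2 hs
    have hinner : HasDerivAt (fun u : ℝ => ρ * u / 2) (ρ / 2) u := by
      simpa using ((hasDerivAt_id u).const_mul ρ).div_const 2
    have hG : HasDerivAt (fun u : ℝ => stmt7G (ρ * u / 2))
        ((1 / (ρ * u / 2) - Real.cosh (ρ * u / 2) / Real.sinh (ρ * u / 2)) * (ρ / 2)) u :=
      by have := (stmt7G_hasDeriv _ hs).comp u hinner; exact this
    have hN : HasDerivAt (fun u : ℝ => ρ * u / 2 * Real.cosh (ρ * u / 2))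
        (ρ / 2 * Real.cosh (ρ * u / 2)
          + ρ * u / 2 * (Real.sinh (ρ * u / 2) * (ρ / 2))) u :=
      hinner.mul (((Real.hasDerivAt_cosh _).comp u hinner))
    have hS : HasDerivAt (fun u : ℝ => Real.sinh (ρ * u / 2))
        (Real.cosh (ρ * u / 2) * (ρ / 2)) u :=
      (Real.hasDerivAt_sinh _).comp u hinner
    have hq := hN.div hS hsinh.ne'
    have := (hG.add_const 1).sub hq
    refine this.congr_deriv ?_
    have hc := Real.cosh_sq (ρ * u / 2)
    field_simp
    linear_combination (4 * ρ^2 * u^2) * hc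
  -- Second derivative is negative.
  have hD2neg : ∀ u : ℝ, 0 < u →
      1 / u - ρ * Real.cosh (ρ * u / 2) / Real.sinh (ρ * u / 2)
        + (ρ ^ 2 * u / 4) / Real.sinh (ρ * u / 2) ^ 2 < 0 := by
    intro u hu
    have hs : 0 < ρ * u / 2 := by positivity
    have hsinh : 0 < Real.sinh (ρ * u / 2) := Real.sinh_pos_iff.2 hs
    have key := stmt7_key (ρ * u / 2) hs
    have hrepr : 1 / u - ρ * Real.cosh (ρ * u / 2) / Real.sinh (ρ * u / 2)
        + (ρ ^ 2 * u / 4) / Real.sinh (ρ * u / 2) ^ 2 =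
        (Real.sinh (ρ * u / 2) ^ 2 + (ρ * u / 2) ^ 2
          - 2 * (ρ * u / 2) * Real.sinh (ρ * u / 2) * Real.cosh (ρ * u / 2))
          / (u * Real.sinh (ρ * u / 2) ^ 2) := by
      field_simp
      ring
    rw [hrepr]
    apply div_neg_of_neg_of_pos (by linarith)
    exact mul_pos hu (pow_pos hsinh 2)
  -- Strict concavity of `f` on `(0, 1]`.
  have hconc : StrictConcaveOn ℝ (Set.Ioc (0:ℝ) 1) (fun u : ℝ => u * stmt7G (ρ * u / 2)) := by
    apply strictConcaveOn_of_deriv2_neg (convex_Ioc 0 1)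
    · intro x hx
      exact (hfD x hx.1).continuousAt.continuousWithinAt
    · intro x hx
      rw [interior_Ioc] at hx
      have hx0 : 0 < x := hx.1
      have hEq : deriv (fun u : ℝ => u * stmt7G (ρ * u / 2)) =ᶠ[nhds x]
          (fun u : ℝ => stmt7G (ρ * u / 2) + 1
            - ρ * u / 2 * Real.cosh (ρ * u / 2) / Real.sinh (ρ * u / 2)) := by
        filter_upwards [Ioi_mem_nhds hx0] with y hy
        exact (hfD y hy).deriv
      show deriv (deriv (fun u : ℝ => u * stmt7G (ρ * u / 2))) x < 0
      rw [hEq.deriv_eq, (hfD2 x hx0).deriv]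
      exact hD2neg x hx0
  refine ⟨?_, ?_, ?_⟩
  · -- strict concavity of K
    refine ⟨convex_Ioc 0 1, fun x hx y hy hxy a b ha hb hab => ?_⟩
    have hmem := (convex_Ioc (0:ℝ) 1) hx hy ha.le hb.le hab
    rw [hKf x hx.1, hKf y hy.1, hKf _ hmem.1]
    exact hconc.2 hx hy hxy ha hb hab
  · -- subadditivity
    intro u v hu hv huv
    rw [hKf u hu, hKf v hv, hKf _ (by positivity : (0:ℝ) < u + v)]
    have hGu : stmt7G (ρ * (u + v) / 2) < stmt7G (ρ * u / 2) :=
      stmt7G_anti (Set.mem_Ioi.2 (by positivity)) (Set.mem_Ioi.2 (by positivity))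
        (by nlinarith)
    have hGv : stmt7G (ρ * (u + v) / 2) < stmt7G (ρ * v / 2) :=
      stmt7G_anti (Set.mem_Ioi.2 (by positivity)) (Set.mem_Ioi.2 (by positivity))
        (by nlinarith)
    nlinarith [mul_le_mul_of_nonneg_left hGu.le hu.le,
      mul_le_mul_of_nonneg_left hGv.le hv.le]
  · -- tsum inequality
    intro u hu hsum hle
    set S := ∑' i, u i with hSdef
    have hS0 : 0 ≤ S := tsum_nonneg hu
    rcases eq_or_lt_of_le hS0 with hS | hS
    · have hui : ∀ i, u i = 0 := by
        intro i
        have h1 : u i ≤ S := hsum.le_tsum i fun j _ => hu j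
        have := hu i
        linarith [hS.symm ▸ h1]
      have h2 : (fun i => K (u i)) = fun _ => (0:ℝ) := funext fun i => by rw [hui, hK0]
      rw [← hS, hK0, h2, tsum_zero]
    · have hpt : ∀ i, u i * stmt7G (ρ * S / 2) ≤ K (u i) := by
        intro i
        rcases eq_or_lt_of_le (hu i) with h0 | h0
        · rw [← h0, hK0, zero_mul]
        · rw [hKf _ h0]
          have hle_i : u i ≤ S := hsum.le_tsum i fun j _ => hu j
          have hG : stmt7G (ρ * S / 2) ≤ stmt7G (ρ * u i / 2) := by
            apply stmt7G_anti.antitoneOn (Set.mem_Ioi.2 (by positivity))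
              (Set.mem_Ioi.2 (by positivity))
            nlinarith
          exact mul_le_mul_of_nonneg_left hG h0.le
      by_cases hsum2 : Summable fun i => K (u i)
      · have hKS : K S = ∑' i, u i * stmt7G (ρ * S / 2) := by
          rw [hKf S hS, tsum_mul_right]
        rw [hKS]
        exact Summable.tsum_le_tsum hpt (hsum.mul_right _) hsum2
      · rw [tsum_eq_zero_of_not_summable hsum2, hKf S hS]
        have hGneg : stmt7G (ρ * S / 2) < 0 := stmt7G_neg _ (by positivity)
        nlinarith
end

section
/- Fix c > 1 and u ∈ [0, 1 − 1/c). Let u* ∈ (0, 1−u) satisfy u*/(1 − e^{−cu*}) = 1 − u. Then K_c(u*) + L_c(u + u*) = L_c(u), where K_c(x) = x·log(cx/(1 − e^{−cx})) − cx²/2 and L_c(v) = (1−v)log(1−v) + (c − log c)v − cv²/2. -/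
/-- For `c > 1`, `u ∈ [0, 1 − 1/c)` and `u* ∈ (0, 1−u)` with
`u*/(1 − e^{−cu*}) = 1 − u`, one has `K_c(u*) + L_c(u + u*) = L_c(u)`. -/
theorem stmt_9 (c u ust : ℝ) (hc : 1 < c) (hu0 : 0 ≤ u) (hu1 : u < 1 - 1 / c)
    (hust : ust ∈ Set.Ioo (0 : ℝ) (1 - u))
    (heq : ust / (1 - Real.exp (-(c * ust))) = 1 - u)
    (K L : ℝ → ℝ)
    (hK : ∀ x : ℝ, 0 < x →
      K x = x * Real.log (c * x / (1 - Real.exp (-(c * x)))) - c * x ^ 2 / 2)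
    (hL : ∀ v : ℝ, L v = (1 - v) * Real.log (1 - v) + (c - Real.log c) * v - c * v ^ 2 / 2) :
    K ust + L (u + ust) = L u := by
  obtain ⟨hup, hust1⟩ := hust
  have hc0 : (0:ℝ) < c := lt_trans one_pos hc
  have h1u : 0 < 1 - u := lt_trans hup hust1
  have hcu : 0 < c * ust := mul_pos hc0 hup
  have he : Real.exp (-(c * ust)) < 1 := Real.exp_lt_one_iff.mpr (by linarith)
  have hden : 0 < 1 - Real.exp (-(c * ust)) := sub_pos.mpr he
  have hlogE : Real.log (Real.exp (-(c * ust))) = -(c * ust) := Real.log_exp _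
  set E : ℝ := Real.exp (-(c * ust)) with hE
  have hustEq : ust = (1 - u) * (1 - E) := (div_eq_iff hden.ne').mp heq
  have hlog1 : Real.log (c * ust / (1 - E)) = Real.log c + Real.log (1 - u) := by
    have h : c * ust / (1 - E) = c * (1 - u) := by
      rw [hustEq]; field_simp
    rw [h, Real.log_mul hc0.ne' h1u.ne']
  have hlog2 : Real.log (1 - (u + ust)) = Real.log (1 - u) - c * ust := by
    have h : (1 : ℝ) - (u + ust) = (1 - u) * E := by rw [hustEq]; ring
    rw [h, Real.log_mul h1u.ne' (Real.exp_pos _).ne', hlogE]; ring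
  rw [hK ust hup, hL (u + ust), hL u, hlog1, hlog2]
  ring
end

section
/- Let u_1 ≥ u_2 ≥ … ≥ 0 with S = ∑_i u_i < ∞. Then ∑_i u_i³ ≤ S³, and consequently for any θ ∈ ℝ: −(1/24)∑_i u_i³ + (1/6)((S − θ)⁺)³ + θ³/6 ≥ −S³/24 + (1/6)((S − θ)⁺)³ + θ³/6 ≥ 0. -/
/-!
Every term satisfies `0 ≤ u i ≤ S`, so `u i ^ 3 ≤ S ^ 2 * u i`; summing gives `∑ u i ^ 3 ≤ S ^ 3`.
For the lower bound, if `θ < S` then `a = S - θ`, `b = θ` satisfy `a + b = S` and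
`(a ^ 3 + b ^ 3) / 6 - S ^ 3 / 24 = S (a - b) ^ 2 / 8 ≥ 0`; if `S ≤ θ` then `θ ^ 3 ≥ S ^ 3`.
-/

theorem tsum_pow_succ_le_tsum_pow_succ {ι : Type*} {u : ι → ℝ} (hnn : ∀ i, 0 ≤ u i)
    (hsum : Summable u) (k : ℕ) : ∑' i, u i ^ (k + 1) ≤ (∑' i, u i) ^ (k + 1) := by
  set S := ∑' i, u i
  have hle_S : ∀ i, u i ^ (k + 1) ≤ S ^ k * u i := fun i => by
    rw [pow_succ]
    have hu_le : u i ≤ S := hsum.le_tsum i fun j _ => hnn j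
    exact mul_le_mul_of_nonneg_right (pow_le_pow_left₀ (hnn i) hu_le k) (hnn i)
  have hsum_pow : Summable fun i => u i ^ (k + 1) :=
    (hsum.mul_left (S ^ k)).of_nonneg_of_le (fun i => pow_nonneg (hnn i) _) hle_S
  calc ∑' i, u i ^ (k + 1) ≤ ∑' i, S ^ k * u i := hsum_pow.tsum_le_tsum hle_S (hsum.mul_left _)
    _ = S ^ (k + 1) := by rw [tsum_mul_left, pow_succ]

theorem cubic_action_nonneg {S : ℝ} (hS : 0 ≤ S) (θ : ℝ) :
    0 ≤ -S ^ 3 / 24 + (1 / 6) * (max (S - θ) 0) ^ 3 + θ ^ 3 / 6 := by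
  rcases le_or_gt S θ with hSθ | hθS
  · rw [max_eq_right (sub_nonpos.mpr hSθ)]
    nlinarith [pow_le_pow_left₀ hS hSθ 3, pow_nonneg hS 3]
  · rw [max_eq_left (sub_pos.mpr hθS).le]
    have key : -S ^ 3 / 24 + (1 / 6) * (S - θ) ^ 3 + θ ^ 3 / 6 = S * (S - 2 * θ) ^ 2 / 8 := by
      ring
    rw [key]
    positivity

theorem stmt_12_general (u : ℕ → ℝ)
    (hnn : ∀ i, 0 ≤ u i) (hsum : Summable u) (θ : ℝ) :
    (∑' i, (u i) ^ 3) ≤ (∑' i, u i) ^ 3 ∧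
    (-(∑' i, u i) ^ 3 / 24 + (1 / 6) * (max ((∑' i, u i) - θ) 0) ^ 3 + θ ^ 3 / 6
      ≤ -(1 / 24) * (∑' i, (u i) ^ 3)
          + (1 / 6) * (max ((∑' i, u i) - θ) 0) ^ 3 + θ ^ 3 / 6) ∧
    0 ≤ -(∑' i, u i) ^ 3 / 24 + (1 / 6) * (max ((∑' i, u i) - θ) 0) ^ 3 + θ ^ 3 / 6 := by
  have hcube : ∑' i, u i ^ 3 ≤ (∑' i, u i) ^ 3 := tsum_pow_succ_le_tsum_pow_succ hnn hsum 2
  exact ⟨hcube, by linarith, cubic_action_nonneg (tsum_nonneg hnn) θ⟩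

/-- For a nonincreasing nonnegative summable sequence with sum `S`, one has
`∑ u_i³ ≤ S³`, and consequently
`−(1/24)∑ u_i³ + (1/6)((S−θ)⁺)³ + θ³/6 ≥ −S³/24 + (1/6)((S−θ)⁺)³ + θ³/6 ≥ 0`. -/
theorem stmt_12 (u : ℕ → ℝ) (hmono : ∀ i j : ℕ, i ≤ j → u j ≤ u i)
    (hnn : ∀ i, 0 ≤ u i) (hsum : Summable u) (θ : ℝ) :
    (∑' i, (u i) ^ 3) ≤ (∑' i, u i) ^ 3 ∧
    (-(∑' i, u i) ^ 3 / 24 + (1 / 6) * (max ((∑' i, u i) - θ) 0) ^ 3 + θ ^ 3 / 6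
      ≤ -(1 / 24) * (∑' i, (u i) ^ 3)
          + (1 / 6) * (max ((∑' i, u i) - θ) 0) ^ 3 + θ ^ 3 / 6) ∧
    0 ≤ -(∑' i, u i) ^ 3 / 24 + (1 / 6) * (max ((∑' i, u i) - θ) 0) ^ 3 + θ ^ 3 / 6 :=
  stmt_12_general u hnn hsum θ
end

section
/- Let θ ∈ ℝ and τ ≥ 0. The infimum of (1/2)∫₀^∞ (−φ̇_t − θ + t)² dt over absolutely continuous non-decreasing functions φ : [0,∞) → ℝ with φ_0 = 0 such that the Lebesgue measure of {t : φ̇_t = 0} is at least τ, equals ((τ − θ)³ ∨ 0 + θ³)/6; the infimum is attained at φ̆ with φ̆̇_t = 0 for t ≤ τ ∨ θ and φ̆̇_t = t − θ for t > τ ∨ θ. -/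
open MeasureTheory

lemma lint_Ioc (θ a b : ℝ) (hab : a ≤ b) :
    ∫⁻ t in Set.Ioc a b, ENNReal.ofReal ((t - θ) ^ 2 / 2) =
      ENNReal.ofReal (((b - θ) ^ 3 - (a - θ) ^ 3) / 6) := by
  have hcont : Continuous (fun t : ℝ => (t - θ) ^ 2 / 2) := by continuity
  rw [← ofReal_integral_eq_lintegral_ofReal
      (hcont.integrableOn_Ioc)
      (Filter.Eventually.of_forall fun t => by positivity)]
  congr 1
  rw [← intervalIntegral.integral_of_le hab]
  have : ∫ t in a..b, (t - θ) ^ 2 / 2 = (∫ t in a..b, (t - θ) ^ 2) / 2 :=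
    intervalIntegral.integral_div 2 _
  rw [this, intervalIntegral.integral_comp_sub_right (fun x => x ^ 2) θ, integral_pow]
  ring

lemma bathtub (θ c m : ℝ) (hθc : θ ≤ c) (hm : 0 ≤ m) (A : Set ℝ)
    (hA : MeasurableSet A) (hAc : A ⊆ Set.Ioi c)
    (hμ : ENNReal.ofReal m ≤ volume A) :
    ∫⁻ t in Set.Ioc c (c + m), ENNReal.ofReal ((t - θ) ^ 2 / 2) ≤
      ∫⁻ t in A, ENNReal.ofReal ((t - θ) ^ 2 / 2) := by
  set f : ℝ → ENNReal := fun t => ENNReal.ofReal ((t - θ) ^ 2 / 2) with hf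
  have hfm : Measurable f := by
    apply Measurable.ennreal_ofReal; fun_prop
  set I := Set.Ioc c (c + m) with hI
  have hImeas : MeasurableSet I := measurableSet_Ioc
  set G : ENNReal := ENNReal.ofReal ((c + m - θ) ^ 2 / 2) with hG
  have hsplitA : (∫⁻ t in A ∩ I, f t) + ∫⁻ t in A \ I, f t = ∫⁻ t in A, f t :=
    lintegral_inter_add_diff (μ := volume) f A hImeas
  have hsplitI : (∫⁻ t in I ∩ A, f t) + ∫⁻ t in I \ A, f t = ∫⁻ t in I, f t :=
    lintegral_inter_add_diff (μ := volume) f I hA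
  have hμI : volume I = ENNReal.ofReal m := by
    rw [hI, Real.volume_Ioc]; congr 1; ring
  have hμIA_fin : volume (I ∩ A) ≠ ⊤ := by
    refine ne_top_of_le_ne_top ?_ (measure_mono Set.inter_subset_left)
    rw [hμI]; exact ENNReal.ofReal_ne_top
  have hμdiff : volume (I \ A) = ENNReal.ofReal m - volume (I ∩ A) := by
    rw [← hμI, ← Set.diff_self_inter,
      measure_diff Set.inter_subset_left (hImeas.inter hA).nullMeasurableSet hμIA_fin]
  have hμle : volume (I \ A) ≤ volume (A \ I) := by
    rw [hμdiff]
    rw [tsub_le_iff_right]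
    calc ENNReal.ofReal m ≤ volume A := hμ
      _ ≤ volume (A \ I) + volume (A ∩ I) := by
          rw [add_comm]
          exact (measure_union_le _ _).trans_eq' (by rw [Set.inter_union_diff])
      _ = volume (A \ I) + volume (I ∩ A) := by rw [Set.inter_comm]
  have h1 : ∫⁻ t in I \ A, f t ≤ G * volume (I \ A) := by
    rw [← setLIntegral_const]
    refine setLIntegral_mono measurable_const fun t ht => ?_
    have h1 : c < t := ht.1.1
    have h2 : t ≤ c + m := ht.1.2
    exact ENNReal.ofReal_le_ofReal (by nlinarith)
  have h2 : G * volume (A \ I) ≤ ∫⁻ t in A \ I, f t := by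
    rw [← setLIntegral_const]
    refine setLIntegral_mono hfm fun t ht => ?_
    have h3 : c < t := hAc ht.1
    have h4 : ¬ (c < t ∧ t ≤ c + m) := by
      intro h; exact ht.2 ⟨h.1, h.2⟩
    have h5 : c + m < t := by
      by_contra h; exact h4 ⟨h3, le_of_not_gt h⟩
    exact ENNReal.ofReal_le_ofReal (by nlinarith)
  calc ∫⁻ t in I, f t = (∫⁻ t in I ∩ A, f t) + ∫⁻ t in I \ A, f t := hsplitI.symm
    _ ≤ (∫⁻ t in I ∩ A, f t) + G * volume (I \ A) := by gcongr
    _ ≤ (∫⁻ t in A ∩ I, f t) + G * volume (A \ I) := by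
        rw [Set.inter_comm]; gcongr
    _ ≤ (∫⁻ t in A ∩ I, f t) + ∫⁻ t in A \ I, f t := by gcongr
    _ = ∫⁻ t in A, f t := hsplitA

/-- The infimum of `(1/2)∫₀^∞ (−φ̇_t − θ + t)² dt` over nonnegative measurable
derivatives `φ̇` whose zero set in `[0,∞)` has Lebesgue measure at least `τ`
equals `((τ−θ)³ ∨ 0 + θ³)/6`, attained at `φ̆̇_t = 0` for `t ≤ τ ∨ θ` and
`φ̆̇_t = t − θ` for `t > τ ∨ θ`. -/
theorem stmt_14 (θ τ : ℝ) (hτ : 0 ≤ τ) :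
    (∀ φ' : ℝ → ℝ, Measurable φ' → (∀ t, 0 ≤ φ' t) →
      ENNReal.ofReal τ ≤ volume {t : ℝ | 0 ≤ t ∧ φ' t = 0} →
      ENNReal.ofReal (((max (τ - θ) 0) ^ 3 + θ ^ 3) / 6) ≤
        ∫⁻ t in Set.Ioi (0 : ℝ), ENNReal.ofReal ((-(φ' t) - θ + t) ^ 2 / 2)) ∧
    (∀ φ' : ℝ → ℝ, (∀ t : ℝ, φ' t = if t ≤ max τ θ then 0 else t - θ) →
      Measurable φ' ∧ (∀ t, 0 ≤ φ' t) ∧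
      ENNReal.ofReal τ ≤ volume {t : ℝ | 0 ≤ t ∧ φ' t = 0} ∧
      (∫⁻ t in Set.Ioi (0 : ℝ), ENNReal.ofReal ((-(φ' t) - θ + t) ^ 2 / 2)) =
        ENNReal.ofReal (((max (τ - θ) 0) ^ 3 + θ ^ 3) / 6)) := by
  constructor
  · -- lower bound
    intro φ' hmφ hnn hZ
    set θp : ℝ := max θ 0 with hθp
    set m : ℝ := max (τ - θp) 0 with hm
    have hθp0 : 0 ≤ θp := le_max_right θ 0
    have hθθp : θ ≤ θp := le_max_left θ 0
    have hm0 : 0 ≤ m := le_max_right _ 0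
    set Z : Set ℝ := {t : ℝ | 0 ≤ t ∧ φ' t = 0} with hZdef
    have hZmeas : MeasurableSet Z := by
      have : Z = Set.Ici 0 ∩ φ' ⁻¹' {0} := by
        ext t; simp [hZdef, Set.mem_Ici]
      rw [this]
      exact measurableSet_Ici.inter (hmφ (measurableSet_singleton 0))
    set A : Set ℝ := Z ∩ Set.Ioi θp with hA
    have hAmeas : MeasurableSet A := hZmeas.inter measurableSet_Ioi
    have hAsub : A ⊆ Set.Ioi θp := Set.inter_subset_right
    -- measure of A
    have hμA : ENNReal.ofReal m ≤ volume A := by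
      rcases le_or_gt (τ - θp) 0 with h | h
      · rw [hm, max_eq_right h]; simp
      · rw [hm, max_eq_left h.le, ENNReal.ofReal_sub τ hθp0, tsub_le_iff_right]
        have hsub : Z ⊆ A ∪ Set.Icc 0 θp := by
          intro t ht
          by_cases h2 : θp < t
          · exact Or.inl ⟨ht, h2⟩
          · exact Or.inr ⟨ht.1, le_of_not_gt h2⟩
        calc ENNReal.ofReal τ ≤ volume Z := hZ
          _ ≤ volume A + volume (Set.Icc 0 θp) :=
              (measure_mono hsub).trans (measure_union_le _ _)
          _ = volume A + ENNReal.ofReal θp := by rw [Real.volume_Icc, sub_zero]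
    -- key real identity
    have hkey : θp + m - θ = max (τ - θ) 0 := by
      rcases le_total θ 0 with hθ | hθ
      · have e1 : θp = 0 := max_eq_right hθ
        have e2 : m = τ := by rw [hm, e1, sub_zero, max_eq_left hτ]
        have e3 : max (τ - θ) 0 = τ - θ := max_eq_left (by linarith)
        rw [e1, e2, e3]; ring
      · have e1 : θp = θ := max_eq_left hθ
        rw [e1, hm, e1]; ring
    have ha : 0 ≤ ((θp - θ) ^ 3 + θ ^ 3) / 6 := by
      rcases le_total θ 0 with hθ | hθ
      · have e1 : θp = 0 := max_eq_right hθ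
        rw [e1]; nlinarith
      · have e1 : θp = θ := max_eq_left hθ
        rw [e1]; nlinarith [pow_nonneg hθ 3]
    have hb : 0 ≤ ((θp + m - θ) ^ 3 - (θp - θ) ^ 3) / 6 := by
      have h1 : (0:ℝ) ≤ θp - θ := by linarith
      have h2 : θp - θ ≤ θp + m - θ := by linarith
      have := pow_le_pow_left₀ h1 h2 3
      linarith
    -- pointwise bound setup
    set f : ℝ → ENNReal := fun t => ENNReal.ofReal ((t - θ) ^ 2 / 2) with hfdef
    set F : ℝ → ENNReal := fun t => ENNReal.ofReal ((-(φ' t) - θ + t) ^ 2 / 2) with hFdef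
    have hFm : Measurable F := by
      apply Measurable.ennreal_ofReal; fun_prop
    have hdisj : Disjoint (Set.Ioc 0 θp) A := by
      rw [Set.disjoint_left]
      intro t ht ht2
      exact absurd (hAsub ht2) (not_lt.mpr ht.2)
    calc ENNReal.ofReal (((max (τ - θ) 0) ^ 3 + θ ^ 3) / 6)
        = ENNReal.ofReal (((θp - θ) ^ 3 + θ ^ 3) / 6) +
            ENNReal.ofReal (((θp + m - θ) ^ 3 - (θp - θ) ^ 3) / 6) := by
          rw [← ENNReal.ofReal_add ha hb]
          congr 1
          rw [← hkey]; ring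
      _ ≤ (∫⁻ t in Set.Ioc 0 θp, f t) + ∫⁻ t in A, f t := by
          gcongr
          · rw [lint_Ioc θ 0 θp hθp0]
            have heq : ((θp - θ) ^ 3 - (0 - θ) ^ 3) / 6 = ((θp - θ) ^ 3 + θ ^ 3) / 6 := by
              ring
            rw [heq]
          · calc ENNReal.ofReal (((θp + m - θ) ^ 3 - (θp - θ) ^ 3) / 6)
                = ∫⁻ t in Set.Ioc θp (θp + m), f t := by
                  rw [lint_Ioc θ θp (θp + m) (by linarith)]
              _ ≤ ∫⁻ t in A, f t := bathtub θ θp m hθθp hm0 A hAmeas hAsub hμA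
      _ = ∫⁻ t in Set.Ioc 0 θp ∪ A, f t :=
          (lintegral_union hAmeas hdisj).symm
      _ ≤ ∫⁻ t in Set.Ioc 0 θp ∪ A, F t := by
          refine setLIntegral_mono hFm fun t ht => ?_
          rcases ht with ht | ht
          · -- t ≤ θp with 0 < t, so θp = θ and t ≤ θ
            have h1 : 0 < t := ht.1
            have h2 : t ≤ θp := ht.2
            have hθpos : 0 < θp := lt_of_lt_of_le h1 h2
            have hθeq : θp = θ := by
              rcases le_total θ 0 with hc | hc
              · rw [hθp, max_eq_right hc] at hθpos; linarith
              · exact max_eq_left hc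
            have h3 : t ≤ θ := hθeq ▸ h2
            have h4 := hnn t
            exact ENNReal.ofReal_le_ofReal (by nlinarith)
          · have h0 : φ' t = 0 := ht.1.2
            refine le_of_eq ?_
            simp only [hfdef, hFdef, h0]
            congr 1; ring
      _ ≤ ∫⁻ t in Set.Ioi 0, F t := by
          refine lintegral_mono_set ?_
          intro t ht
          rcases ht with ht | ht
          · exact ht.1
          · exact lt_of_le_of_lt hθp0 (hAsub ht)
  · -- the minimizer
    intro φ' hφ'
    set M : ℝ := max τ θ with hM
    have hM0 : 0 ≤ M := le_trans hτ (le_max_left τ θ)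
    have hθM : θ ≤ M := le_max_right τ θ
    have hmeas : Measurable φ' := by
      have : φ' = fun t => if t ≤ M then 0 else t - θ := funext hφ'
      rw [this]
      exact Measurable.ite (measurableSet_le measurable_id measurable_const)
        measurable_const (measurable_id.sub measurable_const)
    refine ⟨hmeas, ?_, ?_, ?_⟩
    · intro t
      rw [hφ' t]
      split_ifs with h
      · exact le_refl 0
      · push_neg at h; linarith
    · calc ENNReal.ofReal τ = volume (Set.Icc 0 τ) := by
            rw [Real.volume_Icc, sub_zero]
        _ ≤ volume {t : ℝ | 0 ≤ t ∧ φ' t = 0} := by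
            refine measure_mono fun t ht => ?_
            refine ⟨ht.1, ?_⟩
            rw [hφ' t, if_pos (le_trans ht.2 (le_max_left τ θ))]
    · have hsplit : Set.Ioi (0:ℝ) = Set.Ioc 0 M ∪ Set.Ioi M :=
        (Set.Ioc_union_Ioi_eq_Ioi hM0).symm
      have hdisj : Disjoint (Set.Ioc 0 M) (Set.Ioi M) := by
        rw [Set.disjoint_left]
        intro t ht ht2
        exact absurd ht2 (not_lt.mpr ht.2)
      rw [hsplit, lintegral_union measurableSet_Ioi hdisj]
      have h2 : ∫⁻ t in Set.Ioi M, ENNReal.ofReal ((-(φ' t) - θ + t) ^ 2 / 2) = 0 := by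
        rw [setLIntegral_congr_fun measurableSet_Ioi
          (fun t ht => ?_), lintegral_zero]
        rw [hφ' t, if_neg (not_le.mpr ht)]
        have : -(t - θ) - θ + t = 0 := by ring
        rw [this]
        simp
      have h1 : ∫⁻ t in Set.Ioc 0 M, ENNReal.ofReal ((-(φ' t) - θ + t) ^ 2 / 2) =
          ENNReal.ofReal (((max (τ - θ) 0) ^ 3 + θ ^ 3) / 6) := by
        rw [setLIntegral_congr_fun measurableSet_Ioc
          (fun t ht =>
            show ENNReal.ofReal ((-(φ' t) - θ + t) ^ 2 / 2)
                = ENNReal.ofReal ((t - θ) ^ 2 / 2) by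
              rw [hφ' t, if_pos ht.2]; congr 1; ring)]
        rw [lint_Ioc θ 0 M hM0]
        have hMθ : M - θ = max (τ - θ) 0 := by
          rcases le_total τ θ with h | h
          · rw [hM, max_eq_right h, max_eq_right (by linarith)]; ring
          · rw [hM, max_eq_left h, max_eq_left (by linarith)]
        congr 1
        rw [← hMθ]; ring
      rw [h1, h2, add_zero]
end

section
/- Fix a convex function χ : [0,∞) → [0,∞) with χ(0) = 0, χ(x) > 0 for x > 0, and χ(x)/x → 0 as x → 0. Let S be the set of summable sequences u = (u_1, u_2, …) of nonnegative reals, with Luxembourg metric d_χ(u, u′) = inf{b > 0 : ∑_i χ(|u_i − u′_i|/b) ≤ 1}. If K ⊆ S satisfies sup_{u∈K} ∑_i u_i < ∞ and lim_{i→∞} sup_{u∈K} u_i = 0, then K is relatively compact in (S, d_χ): every sequence in K has a subsequence converging in d_χ to an element of S. -/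
open Filter

/-- Compactness criterion in the Orlicz sequence space: if `K` is a set of
nonnegative summable sequences with uniformly bounded sums and uniformly
vanishing entries, then every sequence in `K` has a subsequence converging in
the Luxembourg metric `d_χ` to a nonnegative summable sequence. -/
theorem stmt_17 (χ : ℝ → ℝ)
    (hconv : ConvexOn ℝ (Set.Ici (0 : ℝ)) χ) (hχ0 : χ 0 = 0)
    (hpos : ∀ x : ℝ, 0 < x → 0 < χ x)
    (hsmall : Filter.Tendsto (fun x => χ x / x) (nhdsWithin 0 (Set.Ioi (0 : ℝ))) (nhds 0))
    (d : (ℕ → ℝ) → (ℕ → ℝ) → ℝ)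
    (hd : ∀ u v : ℕ → ℝ,
      d u v = sInf {b : ℝ | 0 < b ∧ (∑' i, χ (|u i - v i| / b)) ≤ 1})
    (K : Set (ℕ → ℝ))
    (hK : ∀ u ∈ K, (∀ i, 0 ≤ u i) ∧ Summable u)
    (B : ℝ) (hB : ∀ u ∈ K, (∑' i, u i) ≤ B)
    (htail : ∀ ε : ℝ, 0 < ε → ∃ N : ℕ, ∀ u ∈ K, ∀ i ≥ N, u i ≤ ε) :
    ∀ seq : ℕ → (ℕ → ℝ), (∀ n, seq n ∈ K) →
      ∃ (v : ℕ → ℝ) (g : ℕ → ℕ), StrictMono g ∧ (∀ i, 0 ≤ v i) ∧ Summable v ∧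
        Filter.Tendsto (fun n => d (seq (g n)) v) Filter.atTop (nhds 0) := by
  intro seq hseq
  -- basic facts about χ
  have hχnn : ∀ x : ℝ, 0 ≤ x → 0 ≤ χ x := by
    intro x hx
    rcases eq_or_lt_of_le hx with h | h
    · rw [← h, hχ0]
    · exact (hpos x h).le
  have hlin : ∀ c : ℝ, 0 < c → ∃ δ : ℝ, 0 < δ ∧ ∀ x : ℝ, 0 ≤ x → x < δ → χ x ≤ c * x := by
    intro c hc
    obtain ⟨δ, hδ, h⟩ := Metric.tendsto_nhdsWithin_nhds.mp hsmall c hc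
    refine ⟨δ, hδ, fun x hx hxδ => ?_⟩
    rcases eq_or_lt_of_le hx with h0 | h0
    · rw [← h0, hχ0]; simp
    · have h1 := h (Set.mem_Ioi.mpr h0) (by rwa [Real.dist_eq, sub_zero, abs_of_pos h0])
      rw [Real.dist_eq, sub_zero] at h1
      have h2 : χ x / x ≤ c := (lt_of_abs_lt h1).le
      have h3 : (χ x / x) * x ≤ c * x := mul_le_mul_of_nonneg_right h2 hx
      rwa [div_mul_cancel₀ _ (ne_of_gt h0)] at h3
  -- uniform bound
  set B' : ℝ := max B 1 with hB'def
  have hB'pos : (0:ℝ) < B' := lt_of_lt_of_le one_pos (le_max_right _ _)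
  have hB'le : ∀ u ∈ K, (∑' i, u i) ≤ B' := fun u hu => (hB u hu).trans (le_max_left _ _)
  have hcoord : ∀ u ∈ K, ∀ i, u i ≤ B' := by
    intro u hu i
    exact (Summable.le_tsum (hK u hu).2 i (fun j _ => (hK u hu).1 j)).trans (hB'le u hu)
  -- compactness of the cube, extract a pointwise-convergent subsequence
  have hcomp : IsCompact (Set.pi Set.univ (fun _ : ℕ => Set.Icc (0:ℝ) B')) :=
    isCompact_univ_pi (fun _ => isCompact_Icc)
  have hmem : ∀ n, seq n ∈ Set.pi Set.univ (fun _ : ℕ => Set.Icc (0:ℝ) B') := by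
    intro n i _
    exact ⟨(hK _ (hseq n)).1 i, hcoord _ (hseq n) i⟩
  obtain ⟨v, hv, g, hg, hconv_v⟩ := hcomp.tendsto_subseq hmem
  have hvnn : ∀ i, 0 ≤ v i := fun i => (hv i (Set.mem_univ i)).1
  have hptw : ∀ i, Tendsto (fun n => seq (g n) i) atTop (nhds (v i)) := by
    intro i
    exact (tendsto_pi_nhds.mp hconv_v) i
  -- v is summable with tsum ≤ B'
  have hvsum_le : ∀ M : ℕ, ∑ i ∈ Finset.range M, v i ≤ B' := by
    intro M
    have ht : Tendsto (fun n => ∑ i ∈ Finset.range M, seq (g n) i) atTop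
        (nhds (∑ i ∈ Finset.range M, v i)) := tendsto_finset_sum _ (fun i _ => hptw i)
    refine le_of_tendsto ht (Filter.Eventually.of_forall (fun n => ?_))
    exact (Summable.sum_le_tsum (Finset.range M) (fun j _ => (hK _ (hseq (g n))).1 j)
      (hK _ (hseq (g n))).2).trans (hB'le _ (hseq (g n)))
  have hvsummable : Summable v := summable_of_sum_range_le hvnn hvsum_le
  have hvtsum : (∑' i, v i) ≤ B' := Summable.tsum_le_of_sum_range_le hvsummable hvsum_le
  refine ⟨v, g, hg, hvnn, hvsummable, ?_⟩
  rw [Metric.tendsto_atTop]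
  intro ε hε
  set ε' : ℝ := ε / 2 with hε'def
  have hε' : 0 < ε' := by positivity
  -- constants
  have hc : (0:ℝ) < ε' / (8 * B') := by positivity
  obtain ⟨δ', hδ', hδ'prop⟩ := hlin (ε' / (8 * B')) hc
  obtain ⟨δ₀, hδ₀, hδ₀prop⟩ := hlin 1 one_pos
  set δ : ℝ := ε' * δ' / 4 with hδdef
  have hδ : 0 < δ := by positivity
  obtain ⟨N, hN⟩ := htail δ hδ
  have hvtail : ∀ i, N ≤ i → v i ≤ δ := by
    intro i hi
    refine le_of_tendsto (hptw i) (Filter.Eventually.of_forall (fun n => ?_))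
    exact hN _ (hseq (g n)) i hi
  set η : ℝ := min (δ₀ / 2) (1 / (2 * (N + 1))) with hηdef
  have hη : 0 < η := by
    apply lt_min (by positivity)
    positivity
  -- head coordinates converge
  have hhead : ∀ᶠ n in atTop, ∀ i ∈ Finset.range N, |seq (g n) i - v i| < ε' * η := by
    rw [Filter.eventually_all_finset]
    intro i _
    have := (hptw i).sub_const (v i)
    have h2 : Tendsto (fun n => seq (g n) i - v i) atTop (nhds 0) := by
      simpa using this
    have h2a := h2.abs
    rw [abs_zero] at h2a
    exact h2a.eventually_lt_const (by positivity : (0:ℝ) < ε' * η)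
  obtain ⟨N₀, hN₀⟩ := Filter.eventually_atTop.mp hhead
  refine ⟨N₀, fun n hn => ?_⟩
  set u : ℕ → ℝ := seq (g n) with hudef
  have huK : u ∈ K := hseq (g n)
  have hunn : ∀ i, 0 ≤ u i := (hK u huK).1
  have husum : Summable u := (hK u huK).2
  -- the key estimate: the tsum at scale ε' is ≤ 1
  set f : ℕ → ℝ := fun i => χ (|u i - v i| / ε') with hfdef
  have hfnn : ∀ i, 0 ≤ f i := fun i => hχnn _ (by positivity)
  -- tail estimate
  have htail_bound : ∀ i, N ≤ i → f i ≤ (u i + v i) / (8 * B') := by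
    intro i hi
    have h1 : |u i - v i| ≤ u i + v i := by
      rw [abs_sub_le_iff]; constructor <;> nlinarith [hunn i, hvnn i]
    have h2 : u i + v i ≤ 2 * δ := by
      have := hN u huK i hi
      have := hvtail i hi
      linarith
    have hx : |u i - v i| / ε' < δ' := by
      have hle : |u i - v i| / ε' ≤ 2 * δ / ε' := by
        gcongr
        exact h1.trans h2
      have h2δ : 2 * δ / ε' = δ' / 2 := by
        rw [hδdef]; field_simp; ring
      rw [h2δ] at hle
      linarith
    have h3 := hδ'prop _ (by positivity) hx
    calc f i ≤ (ε' / (8 * B')) * (|u i - v i| / ε') := h3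
      _ = |u i - v i| / (8 * B') := by field_simp
      _ ≤ (u i + v i) / (8 * B') := by gcongr
  have hbound_summable : Summable (fun i => (u (i + N) + v (i + N)) / (8 * B')) := by
    apply Summable.div_const
    exact ((summable_nat_add_iff N).mpr husum).add ((summable_nat_add_iff N).mpr hvsummable)
  have hftail_summable : Summable (fun i => f (i + N)) :=
    Summable.of_nonneg_of_le (fun i => hfnn _) (fun i => htail_bound _ (Nat.le_add_left N i))
      hbound_summable
  have hfsummable : Summable f := (summable_nat_add_iff N).mp hftail_summable
  -- tail tsum bound
  have hutail : (∑' i, u (i + N)) ≤ B' := by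
    have h1 := Summable.sum_add_tsum_nat_add (f := u) N husum
    have h2 : (0:ℝ) ≤ ∑ i ∈ Finset.range N, u i := Finset.sum_nonneg (fun i _ => hunn i)
    have h3 := hB'le u huK
    linarith
  have hvtail' : (∑' i, v (i + N)) ≤ B' := by
    have h1 := Summable.sum_add_tsum_nat_add (f := v) N hvsummable
    have h2 : (0:ℝ) ≤ ∑ i ∈ Finset.range N, v i := Finset.sum_nonneg (fun i _ => hvnn i)
    linarith
  have htail_tsum : (∑' i, f (i + N)) ≤ 1 / 4 := by
    have h1 : (∑' i, f (i + N)) ≤ ∑' i, (u (i + N) + v (i + N)) / (8 * B') :=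
      Summable.tsum_le_tsum (fun i => htail_bound _ (Nat.le_add_left N i)) hftail_summable hbound_summable
    have h2 : (∑' i, (u (i + N) + v (i + N)) / (8 * B'))
        = ((∑' i, u (i + N)) + (∑' i, v (i + N))) / (8 * B') := by
      rw [tsum_div_const, Summable.tsum_add ((summable_nat_add_iff N).mpr husum)
        ((summable_nat_add_iff N).mpr hvsummable)]
    rw [h2] at h1
    have h3 : ((∑' i, u (i + N)) + (∑' i, v (i + N))) / (8 * B') ≤ (B' + B') / (8 * B') := by
      gcongr
    have h4 : (B' + B') / (8 * B') = 1 / 4 := by field_simp; ring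
    linarith
  -- head sum bound
  have hhead_sum : (∑ i ∈ Finset.range N, f i) ≤ 1 / 2 := by
    have hterm : ∀ i ∈ Finset.range N, f i ≤ 1 / (2 * (N + 1)) := by
      intro i hi
      have h1 := hN₀ n hn i hi
      have h2 : |u i - v i| / ε' < η := by
        rw [div_lt_iff₀ hε']
        calc |u i - v i| < ε' * η := h1
          _ = η * ε' := by ring
      have hx : |u i - v i| / ε' < δ₀ := by
        have h3 : η ≤ δ₀ / 2 := min_le_left _ _
        linarith
      have h4 := hδ₀prop _ (by positivity) hx
      have h5 : η ≤ 1 / (2 * ((N:ℝ) + 1)) := min_le_right _ _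
      calc f i ≤ 1 * (|u i - v i| / ε') := h4
        _ = |u i - v i| / ε' := one_mul _
        _ ≤ 1 / (2 * ((N:ℝ) + 1)) := by push_cast at h5 ⊢; linarith
    calc (∑ i ∈ Finset.range N, f i) ≤ ∑ i ∈ Finset.range N, 1 / (2 * ((N:ℝ) + 1)) :=
          Finset.sum_le_sum hterm
      _ = N * (1 / (2 * ((N:ℝ) + 1))) := by rw [Finset.sum_const, Finset.card_range]; simp [mul_comm]
      _ ≤ 1 / 2 := by
          rw [mul_one_div, div_le_div_iff₀ (by positivity) (by norm_num)]
          push_cast; linarith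
  have hts : (∑' i, f i) ≤ 1 := by
    rw [← Summable.sum_add_tsum_nat_add (f := f) N hfsummable]
    linarith
  -- conclude about d
  have hdle : d u v ≤ ε' := by
    rw [hd]
    apply csInf_le ⟨0, fun b hb => hb.1.le⟩
    exact ⟨hε', hts⟩
  have hdnn : 0 ≤ d u v := by
    rw [hd]
    exact Real.sInf_nonneg (fun b hb => hb.1.le)
  rw [Real.dist_eq, sub_zero, abs_of_nonneg hdnn]
  have : ε' < ε := by rw [hε'def]; linarith
  linarith
end

section
/- Fix c > 0, τ ∈ [0,1), and a ∈ [0,1] with a ≤ 1 − τ. Among absolutely continuous non-decreasing φ : [τ,1] → ℝ with φ_τ = 0, φ_1 = a, and 0 ≤ φ̇_t ≤ 1 a.e., the functional I(φ) = ∫_τ^1 π((1 − φ̇_t)/(c(1−t)))·c(1−t) dt, where π(x) = x log x − x + 1, satisfies the lower bound I(φ) ≥ (c(1−τ)²/2)·π(2(1−τ−a)/(c(1−τ)²)), attained when 1 − φ̇_t = (2(1−τ−a)/(1−τ)²)(1−t), provided 1 − 2a ≤ τ (so this candidate has φ̇ ≥ 0). -/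
open MeasureTheory
open scoped ENNReal NNReal

lemma p_nonneg : ∀ x : ℝ, 0 ≤ x → 0 ≤ x * Real.log x - x + 1 := by
  intro x hx
  rcases eq_or_lt_of_le hx with h | h
  · simp [← h]
  · have h1 := Real.log_le_sub_one_of_pos (show (0:ℝ) < x⁻¹ by positivity)
    rw [Real.log_inv] at h1
    have h2 : x * x⁻¹ = 1 := mul_inv_cancel₀ h.ne'
    nlinarith

lemma p_convex : ConvexOn ℝ (Set.Ici (0:ℝ)) (fun x => x * Real.log x - x + 1) := by
  have h := Real.convexOn_mul_log
  refine ⟨convex_Ici 0, ?_⟩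
  intro x hx y hy a b ha hb hab
  have := h.2 hx hy ha hb hab
  simp only [smul_eq_mul] at *
  nlinarith

lemma p_cont : Continuous (fun x : ℝ => x * Real.log x - x + 1) :=
  (Real.continuous_mul_log.sub continuous_id).add continuous_const

lemma weight_lintegral (c τ : ℝ) (hc : 0 < c) (hτ1 : τ < 1) :
    ∫⁻ t in Set.Ioc τ 1, ENNReal.ofReal (c * (1 - t)) = ENNReal.ofReal (c * (1 - τ)^2 / 2) := by
  have hwint : ∫ t in τ..1, c * (1 - t) = c * (1 - τ)^2 / 2 := by
    rw [intervalIntegral.integral_const_mul]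
    have h1 : ∫ t in τ..1, (1 - t) = (1 - τ)^2 / 2 := by
      rw [intervalIntegral.integral_sub intervalIntegrable_const intervalIntegral.intervalIntegrable_id,
          intervalIntegral.integral_const, integral_id]
      simp [smul_eq_mul]; ring
    rw [h1]; ring
  have hcont : Continuous (fun t : ℝ => c * (1 - t)) := by continuity
  have hio : IntegrableOn (fun t : ℝ => c * (1 - t)) (Set.Ioc τ 1) :=
    hcont.integrableOn_Ioc
  have hnn : 0 ≤ᵐ[volume.restrict (Set.Ioc τ 1)] fun t : ℝ => c * (1 - t) := by
    rw [Filter.EventuallyLE, ae_restrict_iff' measurableSet_Ioc]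
    exact Filter.Eventually.of_forall fun t ht => mul_nonneg hc.le (by linarith [ht.2])
  rw [← ofReal_integral_eq_lintegral_ofReal hio hnn, ← intervalIntegral.integral_of_le hτ1.le, hwint]

/-- Jensen-type lower bound `I(φ) ≥ (c(1−τ)²/2)·π(2(1−τ−a)/(c(1−τ)²))` for the
functional `I(φ) = ∫_τ^1 π((1−φ̇_t)/(c(1−t)))·c(1−t) dt` over nondecreasing
`φ` with `φ_τ = 0`, `φ_1 = a`, `0 ≤ φ̇ ≤ 1`; attained at
`1 − φ̇_t = (2(1−τ−a)/(1−τ)²)(1−t)` when `1 − 2a ≤ τ`. -/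
theorem stmt_18 (c τ a : ℝ) (hc : 0 < c) (hτ : τ ∈ Set.Ico (0 : ℝ) 1)
    (ha : 0 ≤ a) (haτ : a ≤ 1 - τ)
    (p : ℝ → ℝ) (hp : ∀ x : ℝ, p x = x * Real.log x - x + 1) :
    (∀ φ' : ℝ → ℝ, Measurable φ' →
      (∀ t ∈ Set.Icc τ 1, 0 ≤ φ' t ∧ φ' t ≤ 1) →
      (∫ t in τ..1, φ' t) = a →
      ENNReal.ofReal (c * (1 - τ) ^ 2 / 2 * p (2 * (1 - τ - a) / (c * (1 - τ) ^ 2)))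
        ≤ ∫⁻ t in Set.Ioc τ 1,
            ENNReal.ofReal (p ((1 - φ' t) / (c * (1 - t))) * (c * (1 - t)))) ∧
    (1 - 2 * a ≤ τ →
      ∀ φ' : ℝ → ℝ,
        (∀ t : ℝ, φ' t = 1 - (2 * (1 - τ - a) / (1 - τ) ^ 2) * (1 - t)) →
        (∀ t ∈ Set.Icc τ 1, 0 ≤ φ' t ∧ φ' t ≤ 1) ∧
        (∫ t in τ..1, φ' t) = a ∧
        (∫⁻ t in Set.Ioc τ 1,
            ENNReal.ofReal (p ((1 - φ' t) / (c * (1 - t))) * (c * (1 - t))))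
          = ENNReal.ofReal
              (c * (1 - τ) ^ 2 / 2 * p (2 * (1 - τ - a) / (c * (1 - τ) ^ 2)))) := by
  obtain ⟨hτ0, hτ1⟩ := hτ
  have h1τ : (0:ℝ) < 1 - τ := by linarith
  constructor
  ·
    set M : ℝ := c * (1 - τ)^2 / 2 with hM
    have hM0 : 0 < M := by positivity
    set K : ℝ := 2 * (1 - τ - a) / (c * (1 - τ) ^ 2) with hK
    have hpeq : p = fun x => x * Real.log x - x + 1 := funext hp
    intro φ' hmeas hbdd hint
    by_cases htop : (∫⁻ t in Set.Ioc τ 1,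
        ENNReal.ofReal (p ((1 - φ' t) / (c * (1 - t))) * (c * (1 - t)))) = ⊤
    · rw [htop]; exact le_top
    set w : ℝ → ℝ≥0∞ := fun t => ENNReal.ofReal (c * (1 - t)) with hw
    have hwmeas : Measurable w := ((measurable_const.sub measurable_id').const_mul c).ennreal_ofReal
    set ν : Measure ℝ := (volume.restrict (Set.Ioc τ 1)).withDensity w with hν
    have hνuniv : ν Set.univ = ENNReal.ofReal M := by
      rw [hν, withDensity_apply _ MeasurableSet.univ, Measure.restrict_univ]
      exact weight_lintegral c τ hc hτ1
    haveI : IsFiniteMeasure ν := ⟨by rw [hνuniv]; exact ENNReal.ofReal_lt_top⟩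
    haveI : NeZero ν := ⟨fun h => by
      have := hνuniv
      rw [h] at this
      simp only [Measure.coe_zero, Pi.zero_apply] at this
      exact ((ENNReal.ofReal_pos.mpr hM0).ne' this.symm)⟩
    set f : ℝ → ℝ := fun t => (1 - φ' t) / (c * (1 - t)) with hf
    have hfmeas : Measurable f :=
      (measurable_const.sub hmeas).div ((measurable_const.sub measurable_id').const_mul c)
    have hfnn : ∀ t ∈ Set.Ioc τ 1, 0 ≤ f t := fun t ht =>
      div_nonneg (by linarith [(hbdd t ⟨ht.1.le, ht.2⟩).2]) (mul_nonneg hc.le (by linarith [ht.2]))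
    have hνac : ν ≪ volume.restrict (Set.Ioc τ 1) := withDensity_absolutelyContinuous _ _
    have hae_mem : ∀ᵐ t ∂(volume.restrict (Set.Ioc τ 1)), f t ∈ Set.Ici (0:ℝ) :=
      (ae_restrict_iff' measurableSet_Ioc).2 (Filter.Eventually.of_forall fun t ht => hfnn t ht)
    have hfs : ∀ᵐ t ∂ν, f t ∈ Set.Ici (0:ℝ) := hνac.ae_le hae_mem
    have hpf_nn : ∀ᵐ t ∂ν, 0 ≤ p (f t) := hfs.mono fun t ht => by rw [hp]; exact p_nonneg _ ht
    have hpcont : Continuous p := by rw [hpeq]; exact p_cont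
    have hpfmeas : Measurable fun t => p (f t) := hpcont.measurable.comp hfmeas
    have hLν : (∫⁻ t in Set.Ioc τ 1,
        ENNReal.ofReal (p ((1 - φ' t) / (c * (1 - t))) * (c * (1 - t))))
        = ∫⁻ t, ENNReal.ofReal (p (f t)) ∂ν := by
      rw [hν, lintegral_withDensity_eq_lintegral_mul _ hwmeas hpfmeas.ennreal_ofReal]
      refine lintegral_congr_ae ?_
      rw [Filter.EventuallyEq, ae_restrict_iff' measurableSet_Ioc]
      refine Filter.Eventually.of_forall fun t ht => ?_
      have h1 : 0 ≤ p (f t) := by rw [hp]; exact p_nonneg _ (hfnn t ht)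
      simp only [hw, Pi.mul_apply]
      rw [ENNReal.ofReal_mul h1, mul_comm]
    have hint_pf : Integrable (fun t => p (f t)) ν := by
      refine ⟨hpfmeas.aestronglyMeasurable, ?_⟩
      rw [hasFiniteIntegral_iff_ofReal hpf_nn, ← hLν]
      exact lt_top_iff_ne_top.mpr htop
    have hintf : Integrable f ν := by
      rw [hν, integrable_withDensity_iff hwmeas
        (Filter.Eventually.of_forall fun t => ENNReal.ofReal_lt_top)]
      refine Integrable.mono' (integrable_const 1)
        ((hfmeas.mul (ENNReal.measurable_toReal.comp hwmeas)).aestronglyMeasurable) ?_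
      rw [ae_restrict_iff' measurableSet_Ioc]
      refine Filter.Eventually.of_forall fun t ht => ?_
      have hwt : (w t).toReal = c * (1 - t) := by
        rw [hw]; exact ENNReal.toReal_ofReal (mul_nonneg hc.le (by linarith [ht.2]))
      rw [hwt]
      rcases eq_or_lt_of_le ht.2 with h1 | h1
      · have : f t * (c * (1 - t)) = 0 := by rw [← h1]; simp
        rw [this]; simp
      · have hct : (0:ℝ) < c * (1 - t) := mul_pos hc (by linarith)
        have : f t * (c * (1 - t)) = 1 - φ' t := by
          rw [hf]; field_simp
        rw [this, Real.norm_eq_abs, abs_le]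
        have := hbdd t ⟨ht.1.le, ht.2⟩
        constructor <;> linarith [this.1, this.2]
    have hne1 : ∀ᵐ t : ℝ ∂volume, t ≠ 1 := by
      rw [ae_iff]
      have : {t : ℝ | ¬ t ≠ 1} = {1} := by ext t; simp
      rw [this]; exact measure_singleton 1
    have hφint : IntegrableOn φ' (Set.Ioc τ 1) volume := by
      refine Integrable.mono' (integrable_const 1) hmeas.aestronglyMeasurable ?_
      rw [ae_restrict_iff' measurableSet_Ioc]
      refine Filter.Eventually.of_forall fun t ht => ?_
      have := hbdd t ⟨ht.1.le, ht.2⟩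
      rw [Real.norm_eq_abs, abs_le]
      constructor <;> linarith [this.1, this.2]
    have hmean : ∫ t, f t ∂ν = 1 - τ - a := by
      have hdmeas : Measurable fun t : ℝ => (c * (1 - t)).toNNReal :=
        ((measurable_const.sub measurable_id').const_mul c).real_toNNReal
      rw [hν, show w = (fun t => (((c * (1 - t)).toNNReal : ℝ≥0) : ℝ≥0∞)) from rfl,
        integral_withDensity_eq_integral_smul hdmeas f]
      have hcongr : (fun t => (c * (1 - t)).toNNReal • f t)
          =ᵐ[volume.restrict (Set.Ioc τ 1)] (fun t => 1 - φ' t) := by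
        rw [Filter.EventuallyEq, ae_restrict_iff' measurableSet_Ioc]
        filter_upwards [hne1] with t ht1 ht
        have hlt : t < 1 := lt_of_le_of_ne ht.2 ht1
        have hct : (0:ℝ) < c * (1 - t) := mul_pos hc (by linarith)
        rw [NNReal.smul_def, Real.coe_toNNReal _ hct.le, hf, smul_eq_mul]
        field_simp
      rw [integral_congr_ae hcongr,
        integral_sub (integrableOn_const (C := (1:ℝ)) measure_Ioc_lt_top.ne) hφint]
      rw [intervalIntegral.integral_of_le hτ1.le] at hint
      rw [hint, setIntegral_const, measureReal_def, Real.volume_Ioc, smul_eq_mul, mul_one,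
        ENNReal.toReal_ofReal (by linarith)]
    have hpconv : ConvexOn ℝ (Set.Ici (0:ℝ)) p := by rw [hpeq]; exact p_convex
    have hjen := hpconv.map_average_le hpcont.continuousOn isClosed_Ici hfs hintf hint_pf
    rw [average_eq, average_eq, hmean, measureReal_def, hνuniv, ENNReal.toReal_ofReal hM0.le, smul_eq_mul,
      smul_eq_mul] at hjen
    have hKmean : M⁻¹ * (1 - τ - a) = K := by
      rw [hK, hM]; field_simp
    rw [hKmean] at hjen
    have hfinal : M * p K ≤ ∫ t, p (f t) ∂ν := by
      have h2 := mul_le_mul_of_nonneg_left hjen hM0.le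
      calc M * p K ≤ M * (M⁻¹ * ∫ t, p (f t) ∂ν) := h2
      _ = ∫ t, p (f t) ∂ν := by field_simp
    calc ENNReal.ofReal (M * p K) ≤ ENNReal.ofReal (∫ t, p (f t) ∂ν) :=
          ENNReal.ofReal_le_ofReal hfinal
    _ = ∫⁻ t, ENNReal.ofReal (p (f t)) ∂ν := ofReal_integral_eq_lintegral_ofReal hint_pf hpf_nn
    _ = _ := hLν.symm
  ·
    intro hcond φ' hφ'
    set K0 : ℝ := 2 * (1 - τ - a) / (1 - τ) ^ 2 with hK0
    have hK00 : 0 ≤ K0 := by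
      apply div_nonneg (by linarith) (by positivity)
    have hK0τ : K0 * (1 - τ) ≤ 1 := by
      rw [hK0, div_mul_eq_mul_div, div_le_one (by positivity)]
      nlinarith
    set K : ℝ := 2 * (1 - τ - a) / (c * (1 - τ) ^ 2) with hK
    have hKc : K = K0 / c := by rw [hK, hK0, div_div, mul_comm ((1 - τ)^2) c]
    have hKnn : 0 ≤ K := div_nonneg (by linarith) (by positivity)
    refine ⟨?_, ?_, ?_⟩
    · intro t ht
      rw [hφ' t]
      constructor
      · have h1 : K0 * (1 - t) ≤ K0 * (1 - τ) :=
          mul_le_mul_of_nonneg_left (by linarith [ht.1]) hK00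
        linarith
      · have : 0 ≤ K0 * (1 - t) := mul_nonneg hK00 (by linarith [ht.2])
        linarith
    · have e1 : Set.EqOn φ' (fun t => (1 - K0) + K0 * t) (Set.uIcc τ 1) := by
        intro t _; rw [hφ' t]; ring
      rw [intervalIntegral.integral_congr e1,
          intervalIntegral.integral_add intervalIntegrable_const
            (intervalIntegral.intervalIntegrable_id.const_mul K0),
          intervalIntegral.integral_const, intervalIntegral.integral_const_mul, integral_id,
          hK0]
      rw [smul_eq_mul]; field_simp
      ring
    · have hpKnn : 0 ≤ p K := by rw [hp]; exact p_nonneg K hKnn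
      have hae : (fun t => ENNReal.ofReal (p ((1 - φ' t) / (c * (1 - t))) * (c * (1 - t))))
          =ᵐ[volume.restrict (Set.Ioc τ 1)]
          (fun t => ENNReal.ofReal (p K) * ENNReal.ofReal (c * (1 - t))) := by
        have hne : ∀ᵐ t : ℝ ∂volume, t ≠ 1 := by
          rw [ae_iff]
          have : {t : ℝ | ¬ t ≠ 1} = {1} := by ext t; simp
          rw [this]; exact measure_singleton 1
        rw [Filter.EventuallyEq, ae_restrict_iff' measurableSet_Ioc]
        filter_upwards [hne] with t hne1 ht
        have ht1 : (0:ℝ) < 1 - t := lt_of_le_of_ne (by linarith [ht.2]) (by intro h; exact hne1 (by linarith))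
        have harg : (1 - φ' t) / (c * (1 - t)) = K := by
          rw [hφ' t, hKc]
          have : (1:ℝ) - (1 - K0 * (1 - t)) = K0 * (1 - t) := by ring
          rw [this, mul_comm c (1 - t), mul_comm K0 (1 - t), mul_div_mul_left _ _ ht1.ne']
        rw [harg, ENNReal.ofReal_mul hpKnn]
      rw [lintegral_congr_ae hae, lintegral_const_mul' _ _ ENNReal.ofReal_ne_top,
          weight_lintegral c τ hc hτ1, ← ENNReal.ofReal_mul hpKnn, mul_comm]
end

section
/- Fix c > 0. For u ∈ (0,1) and r ≥ 0, the supremum over ρ ≥ 0 of K_ρ(u) + r·log(ρ/c), where K_ρ(u) = u·log(ρu/(1 − e^{−ρu})) − ρu²/2, is attained at the unique ρ̃ > 0 satisfying ρ̃u/(1 − e^{−ρ̃u}) = 1 + r/u + ρ̃u/2 when r > 0 (and at ρ̃ = c when one minimizes additionally over r, giving value K_c(u) at r chosen optimally; for r = 0 the supremum over ρ of K_ρ(u) equals 0, approached as ρ → 0). Moreover inf_{r ≥ 0} sup_{ρ ≥ 0}(K_ρ(u) + r·log(ρ/c)) = K_c(u), attained at r* = cu²/(1 − e^{−cu}) − cu²/2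 − u. -/
open Real Set Filter

noncomputable def phiF (x : ℝ) : ℝ := x / (1 - Real.exp (-x)) - x / 2

lemma expo_pos {x : ℝ} (hx : 0 < x) : 0 < 1 - Real.exp (-x) := by
  have : Real.exp (-x) < 1 := Real.exp_lt_one_iff.mpr (by linarith)
  linarith

lemma phiF_eq {x : ℝ} (hx : 0 < x) :
    phiF x = (x / 2) * Real.cosh (x / 2) / Real.sinh (x / 2) := by
  have hs : 0 < Real.sinh (x / 2) := Real.sinh_pos_iff.mpr (by linarith)
  have he : (0:ℝ) < Real.exp (-(x/2)) := Real.exp_pos _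
  set e := Real.exp (-(x/2)) with hedef
  set s := Real.sinh (x/2) with hsdef
  have hem : e * e = Real.exp (-x) := by rw [hedef, ← Real.exp_add]; ring_nf
  have hei : Real.exp (x/2) * e = 1 := by rw [hedef, ← Real.exp_add]; simp
  have hse : (1:ℝ) = 2 * s * e + e * e := by
    rw [hsdef, Real.sinh_eq]
    linear_combination -hei
  have hcs : Real.cosh (x/2) = s + e := by
    rw [hsdef, hedef, Real.cosh_eq, Real.sinh_eq]; ring
  have h1 : 1 - Real.exp (-x) = 2 * s * e := by rw [← hem]; linear_combination hse
  rw [phiF, h1, hcs]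
  field_simp
  linear_combination hse

lemma sinh_lt_mul_cosh {y : ℝ} (hy : 0 < y) : Real.sinh y < y * Real.cosh y := by
  have hmono : StrictMonoOn (fun t : ℝ => t * Real.cosh t - Real.sinh t) (Set.Ici 0) := by
    apply strictMonoOn_of_deriv_pos (convex_Ici 0)
    · exact ((continuous_id.mul Real.continuous_cosh).sub Real.continuous_sinh).continuousOn
    · intro t ht
      rw [interior_Ici, Set.mem_Ioi] at ht
      have hD : HasDerivAt (fun t : ℝ => t * Real.cosh t - Real.sinh t)
          (1 * Real.cosh t + t * Real.sinh t - Real.cosh t) t :=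
        ((hasDerivAt_id t).mul (Real.hasDerivAt_cosh t)).sub (Real.hasDerivAt_sinh t)
      rw [hD.deriv]
      have := Real.sinh_pos_iff.mpr ht
      nlinarith
  have := hmono (Set.self_mem_Ici) (Set.mem_Ici.mpr hy.le) hy
  simpa using this

lemma psi_hasDeriv {y : ℝ} (hy : 0 < y) :
    HasDerivAt (fun y : ℝ => y * Real.cosh y / Real.sinh y)
      ((Real.sinh y * Real.cosh y - y) / Real.sinh y ^ 2) y := by
  have hs : 0 < Real.sinh y := Real.sinh_pos_iff.mpr hy
  have H := (((hasDerivAt_id y).mul (Real.hasDerivAt_cosh y)).div (Real.hasDerivAt_sinh y) hs.ne')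
  refine H.congr_deriv ?_
  have hid := Real.cosh_sq_sub_sinh_sq y
  congr 1; simp only [id, Pi.mul_apply]
  ring_nf
  nlinarith [hid]

lemma psi_mono : StrictMonoOn (fun y : ℝ => y * Real.cosh y / Real.sinh y) (Set.Ioi 0) := by
  apply strictMonoOn_of_deriv_pos (convex_Ioi 0)
  · exact ContinuousOn.div (continuous_id.mul Real.continuous_cosh).continuousOn
      Real.continuous_sinh.continuousOn
      (fun y hy => (Real.sinh_pos_iff.mpr hy).ne')
  · intro y hy
    rw [interior_Ioi, Set.mem_Ioi] at hy
    rw [(psi_hasDeriv hy).deriv]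
    have hs : 0 < Real.sinh y := Real.sinh_pos_iff.mpr hy
    have h1 : y < Real.sinh y := Real.self_lt_sinh_iff.mpr hy
    have h2 : 1 ≤ Real.cosh y := Real.one_le_cosh y
    have : y < Real.sinh y * Real.cosh y := by nlinarith
    have hsq : (0:ℝ) < Real.sinh y ^ 2 := by positivity
    exact div_pos (by linarith) hsq

lemma phiF_mono : StrictMonoOn phiF (Set.Ioi 0) := by
  intro a ha b hb hab
  rw [Set.mem_Ioi] at ha hb
  rw [phiF_eq ha, phiF_eq hb]
  exact psi_mono (Set.mem_Ioi.mpr (by linarith)) (Set.mem_Ioi.mpr (by linarith)) (by linarith)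

lemma phiF_gt_one {x : ℝ} (hx : 0 < x) : 1 < phiF x := by
  rw [phiF_eq hx]
  have hs : 0 < Real.sinh (x/2) := Real.sinh_pos_iff.mpr (by linarith)
  rw [lt_div_iff₀ hs, one_mul]
  exact sinh_lt_mul_cosh (by linarith)

lemma phiF_gt_half {x : ℝ} (hx : 0 < x) : x / 2 < phiF x := by
  rw [phiF_eq hx]
  have hs : 0 < Real.sinh (x/2) := Real.sinh_pos_iff.mpr (by linarith)
  rw [lt_div_iff₀ hs]
  have : Real.sinh (x/2) < Real.cosh (x/2) := by
    rw [Real.sinh_eq, Real.cosh_eq]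
    have := Real.exp_pos (-(x/2))
    linarith
  nlinarith

lemma phiF_cont : ContinuousOn phiF (Set.Ioi 0) := by
  apply ContinuousOn.sub
  · exact ContinuousOn.div continuous_id.continuousOn
      (continuous_const.sub (Real.continuous_exp.comp continuous_neg)).continuousOn
      (fun x hx => (expo_pos hx).ne')
  · exact (continuous_id.div_const 2).continuousOn

lemma ratio_tendsto :
    Filter.Tendsto (fun x : ℝ => x / (1 - Real.exp (-x))) (nhdsWithin 0 (Set.Ioi 0)) (nhds 1) := by
  have hd : HasDerivAt (fun x : ℝ => 1 - Real.exp (-x)) 1 0 := by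
    have h1 : HasDerivAt (fun x : ℝ => Real.exp (-x)) (-Real.exp (-(0:ℝ))) 0 := by
      simpa [Function.comp_def] using (Real.hasDerivAt_exp (-(0:ℝ))).comp 0 (hasDerivAt_neg 0)
    exact ((hasDerivAt_const (0:ℝ) (1:ℝ)).sub h1).congr_deriv (by simp)
  have hslope := hasDerivAt_iff_tendsto_slope.mp hd
  have hslope' : Filter.Tendsto (fun x : ℝ => (1 - Real.exp (-x)) / x)
      (nhdsWithin 0 (Set.Ioi 0)) (nhds 1) := by
    have := hslope.mono_left (nhdsWithin_mono 0 (fun x hx => by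
      simp only [Set.mem_compl_iff, Set.mem_singleton_iff]
      exact ne_of_gt (Set.mem_Ioi.mp hx)))
    refine this.congr' ?_
    filter_upwards [self_mem_nhdsWithin] with x hx
    simp [slope_def_field]
  have hinv := hslope'.inv₀ (by norm_num : (1:ℝ) ≠ 0)
  rw [inv_one] at hinv
  refine hinv.congr' ?_
  filter_upwards [self_mem_nhdsWithin] with x hx
  rw [inv_div]

lemma phiF_tendsto :
    Filter.Tendsto phiF (nhdsWithin 0 (Set.Ioi 0)) (nhds 1) := by
  have h2 : Filter.Tendsto (fun x : ℝ => x / 2) (nhdsWithin 0 (Set.Ioi 0)) (nhds 0) := by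
    have : Filter.Tendsto (fun x : ℝ => x / 2) (nhds 0) (nhds 0) := by
      simpa using ((continuous_id.div_const 2).tendsto (0:ℝ))
    exact this.mono_left nhdsWithin_le_nhds
  simpa [show phiF = fun x => x / (1 - Real.exp (-x)) - x / 2 from rfl] using ratio_tendsto.sub h2

lemma phiF_surj {t : ℝ} (ht : 1 < t) : ∃ x : ℝ, 0 < x ∧ phiF x = t := by
  have hev : ∀ᶠ x in nhdsWithin 0 (Set.Ioi 0), phiF x < t :=
    phiF_tendsto (IsOpen.mem_nhds isOpen_Iio ht)
  obtain ⟨a, hat, ha'⟩ := (hev.and self_mem_nhdsWithin).exists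
  have ha : (0:ℝ) < a := ha'
  set b := max a (2 * t) with hb
  have hab : a ≤ b := le_max_left _ _
  have hbt : t ≤ phiF b := by
    have hb2 : 2 * t ≤ b := le_max_right _ _
    have hbpos : 0 < b := lt_of_lt_of_le ha hab
    have := phiF_gt_half hbpos
    linarith
  have hsub : Set.Icc a b ⊆ Set.Ioi 0 := fun x hx => lt_of_lt_of_le ha hx.1
  have hmem : t ∈ Set.Icc (phiF a) (phiF b) := ⟨hat.le, hbt⟩
  obtain ⟨x, hx, hphix⟩ := intermediate_value_Icc hab (phiF_cont.mono hsub) hmem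
  exact ⟨x, lt_of_lt_of_le ha hx.1, hphix⟩

lemma g_hasDeriv {u r c ρ : ℝ} (hu : 0 < u) (hc : 0 < c) (hρ : 0 < ρ) :
    HasDerivAt (fun s : ℝ => u * Real.log (s*u/(1 - Real.exp (-(s*u)))) - s*u^2/2
      + r * Real.log (s/c)) (u/ρ * (1 + r/u - phiF (ρ*u))) ρ := by
  have hE : 0 < 1 - Real.exp (-(ρ*u)) := expo_pos (mul_pos hρ hu)
  -- derivative of the "nice" version
  have A : HasDerivAt (fun s : ℝ => Real.log s) ρ⁻¹ ρ := Real.hasDerivAt_log hρ.ne'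
  have inner : HasDerivAt (fun s : ℝ => 1 - Real.exp (-(s*u))) (u * Real.exp (-(ρ*u))) ρ := by
    have h1 : HasDerivAt (fun s : ℝ => -(s*u)) (-u) ρ := by
      simpa [Pi.neg_def] using ((hasDerivAt_id ρ).mul_const u).neg
    have h2 : HasDerivAt (fun s : ℝ => Real.exp (-(s*u))) (Real.exp (-(ρ*u)) * (-u)) ρ :=
      (Real.hasDerivAt_exp _).comp ρ h1
    have := (hasDerivAt_const ρ (1:ℝ)).sub h2
    exact this.congr_deriv (by ring)
    try ring
  have B : HasDerivAt (fun s : ℝ => Real.log (1 - Real.exp (-(s*u))))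
      (u * Real.exp (-(ρ*u)) / (1 - Real.exp (-(ρ*u)))) ρ := inner.log hE.ne'
  have C : HasDerivAt (fun s : ℝ => s*u^2/2) (u^2/2) ρ := by
    simpa using ((hasDerivAt_id ρ).mul_const (u^2)).div_const 2
  have H : HasDerivAt (fun s : ℝ => u * (Real.log s + Real.log u
        - Real.log (1 - Real.exp (-(s*u)))) - s*u^2/2 + r * (Real.log s - Real.log c))
      (u * (ρ⁻¹ - u * Real.exp (-(ρ*u)) / (1 - Real.exp (-(ρ*u)))) - u^2/2 + r * ρ⁻¹) ρ := by
    have := (((A.add_const (Real.log u)).sub B).const_mul u).sub C |>.add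
      ((A.sub_const (Real.log c)).const_mul r)
    exact this
    try ring
  have heq : (fun s : ℝ => u * Real.log (s*u/(1 - Real.exp (-(s*u)))) - s*u^2/2
      + r * Real.log (s/c)) =ᶠ[nhds ρ] (fun s : ℝ => u * (Real.log s + Real.log u
        - Real.log (1 - Real.exp (-(s*u)))) - s*u^2/2 + r * (Real.log s - Real.log c)) := by
    filter_upwards [IsOpen.mem_nhds isOpen_Ioi (Set.mem_Ioi.mpr hρ)] with s hs
    have hs' : (0:ℝ) < s := hs
    have hE' : 0 < 1 - Real.exp (-(s*u)) := expo_pos (mul_pos hs' hu)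
    rw [Real.log_div (by positivity) hE'.ne', Real.log_mul hs'.ne' hu.ne',
      Real.log_div hs'.ne' hc.ne']
  have Hfinal := H.congr_of_eventuallyEq heq
  refine Hfinal.congr_deriv ?_
  rw [phiF]
  field_simp [show 1 - Real.exp (-(u*ρ)) ≠ 0 by rw [mul_comm]; exact hE.ne']
  ring

lemma g_cont {u r c : ℝ} (hu : 0 < u) (hc : 0 < c) :
    ContinuousOn (fun s : ℝ => u * Real.log (s*u/(1 - Real.exp (-(s*u)))) - s*u^2/2
      + r * Real.log (s/c)) (Set.Ioi 0) := by
  intro s hs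
  exact ((g_hasDeriv (r := r) hu hc hs).differentiableAt.continuousAt).continuousWithinAt

lemma key_max {u r c ρt : ℝ} (hu : 0 < u) (hc : 0 < c) (hρt : 0 < ρt)
    (hstat : phiF (ρt*u) = 1 + r/u) {ρ : ℝ} (hρ : 0 < ρ) :
    u * Real.log (ρ*u/(1 - Real.exp (-(ρ*u)))) - ρ*u^2/2 + r * Real.log (ρ/c)
      ≤ u * Real.log (ρt*u/(1 - Real.exp (-(ρt*u)))) - ρt*u^2/2 + r * Real.log (ρt/c) := by
  set g := fun s : ℝ => u * Real.log (s*u/(1 - Real.exp (-(s*u)))) - s*u^2/2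
      + r * Real.log (s/c) with hg
  rcases lt_trichotomy ρ ρt with h | h | h
  · have hmono : StrictMonoOn g (Set.Icc ρ ρt) := by
      apply strictMonoOn_of_deriv_pos (convex_Icc _ _)
      · exact (g_cont hu hc).mono (fun x hx => lt_of_lt_of_le hρ hx.1)
      · intro s hs
        rw [interior_Icc, Set.mem_Ioo] at hs
        have hs' : 0 < s := lt_trans hρ hs.1
        rw [(g_hasDeriv (r := r) hu hc hs').deriv]
        have hlt : phiF (s*u) < phiF (ρt*u) :=
          phiF_mono (Set.mem_Ioi.mpr (mul_pos hs' hu)) (Set.mem_Ioi.mpr (mul_pos hρt hu))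
            (by nlinarith [hs.2])
        rw [hstat] at hlt
        have : 0 < 1 + r/u - phiF (s*u) := by linarith
        have : 0 < u/s := div_pos hu hs'
        positivity
    exact (hmono (Set.mem_Icc.mpr ⟨le_refl _, h.le⟩) (Set.mem_Icc.mpr ⟨h.le, le_refl _⟩) h).le
  · rw [h]
  · have hanti : StrictAntiOn g (Set.Icc ρt ρ) := by
      apply strictAntiOn_of_deriv_neg (convex_Icc _ _)
      · exact (g_cont hu hc).mono (fun x hx => lt_of_lt_of_le hρt hx.1)
      · intro s hs
        rw [interior_Icc, Set.mem_Ioo] at hs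
        have hs' : 0 < s := lt_trans hρt hs.1
        rw [(g_hasDeriv (r := r) hu hc hs').deriv]
        have hlt : phiF (ρt*u) < phiF (s*u) :=
          phiF_mono (Set.mem_Ioi.mpr (mul_pos hρt hu)) (Set.mem_Ioi.mpr (mul_pos hs' hu))
            (by nlinarith [hs.1])
        rw [hstat] at hlt
        have h1 : 1 + r/u - phiF (s*u) < 0 := by linarith
        have h2 : 0 < u/s := div_pos hu hs'
        nlinarith
    exact (hanti (Set.mem_Icc.mpr ⟨le_refl _, h.le⟩) (Set.mem_Icc.mpr ⟨h.le, le_refl _⟩) h).le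

lemma K_nonpos {u ρ : ℝ} (hu : 0 < u) (hρ : 0 < ρ) :
    u * Real.log (ρ*u/(1 - Real.exp (-(ρ*u)))) - ρ*u^2/2 ≤ 0 := by
  have hx : 0 < ρ*u := mul_pos hρ hu
  have hE : 0 < 1 - Real.exp (-(ρ*u)) := expo_pos hx
  have hlog : Real.log (ρ*u/(1 - Real.exp (-(ρ*u)))) ≤ ρ*u/2 := by
    rw [Real.log_le_iff_le_exp (by positivity)]
    rw [div_le_iff₀ hE]
    have hsinh : ρ*u/2 ≤ Real.sinh (ρ*u/2) := (Real.self_lt_sinh_iff.mpr (by linarith)).le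
    rw [Real.sinh_eq] at hsinh
    have hprod : Real.exp (ρ*u/2) * Real.exp (-(ρ*u)) = Real.exp (-(ρ*u/2)) := by
      rw [← Real.exp_add]; ring_nf
    calc ρ*u ≤ Real.exp (ρ*u/2) - Real.exp (-(ρ*u/2)) := by linarith
    _ = Real.exp (ρ*u/2) * (1 - Real.exp (-(ρ*u))) := by rw [mul_sub, mul_one, hprod]
  nlinarith [mul_le_mul_of_nonneg_left hlog hu.le]

lemma K_tendsto {u : ℝ} (hu : 0 < u) :
    Filter.Tendsto (fun ρ : ℝ => u * Real.log (ρ*u/(1 - Real.exp (-(ρ*u)))) - ρ*u^2/2)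
      (nhdsWithin 0 (Set.Ioi 0)) (nhds 0) := by
  have h1 : Filter.Tendsto (fun ρ : ℝ => ρ*u) (nhdsWithin 0 (Set.Ioi 0))
      (nhdsWithin 0 (Set.Ioi 0)) := by
    rw [tendsto_nhdsWithin_iff]
    constructor
    · have : Filter.Tendsto (fun ρ : ℝ => ρ*u) (nhds 0) (nhds 0) := by
        simpa [Pi.mul_def] using ((continuous_id.mul continuous_const).tendsto (0:ℝ))
      exact this.mono_left nhdsWithin_le_nhds
    · filter_upwards [self_mem_nhdsWithin] with ρ hρ
      exact mul_pos hρ hu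
  have h2 := ratio_tendsto.comp h1
  have h3 : Filter.Tendsto (fun ρ : ℝ => u * Real.log (ρ*u/(1 - Real.exp (-(ρ*u)))))
      (nhdsWithin 0 (Set.Ioi 0)) (nhds 0) := by
    have hlog := (Real.continuousAt_log one_ne_zero).tendsto.comp h2
    rw [Real.log_one] at hlog
    simpa using hlog.const_mul u
  have h4 : Filter.Tendsto (fun ρ : ℝ => ρ*u^2/2) (nhdsWithin 0 (Set.Ioi 0)) (nhds 0) := by
    have : Filter.Tendsto (fun ρ : ℝ => ρ*u^2/2) (nhds 0) (nhds 0) := by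
      simpa using (((continuous_id.mul continuous_const).div_const 2).tendsto (0:ℝ))
    exact this.mono_left nhdsWithin_le_nhds
  simpa using h3.sub h4

/-- For `c > 0` and `u ∈ (0,1)`: for `r > 0` the supremum over `ρ > 0` of
`K_ρ(u) + r·log(ρ/c)` is attained at the unique `ρ̃ > 0` with
`ρ̃u/(1 − e^{−ρ̃u}) = 1 + r/u + ρ̃u/2`; for `r = 0` the supremum over `ρ > 0`
of `K_ρ(u)` equals `0`, approached as `ρ → 0⁺`; and
`inf_{r≥0} sup_{ρ>0} (K_ρ(u) + r log(ρ/c)) = K_c(u)`, attained at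
`r* = cu²/(1 − e^{−cu}) − cu²/2 − u` (with the sup then attained at `ρ = c`). -/
theorem stmt_19 (c u : ℝ) (hc : 0 < c) (hu : u ∈ Set.Ioo (0 : ℝ) 1)
    (K : ℝ → ℝ → ℝ)
    (hK : ∀ ρ v : ℝ, 0 < ρ → 0 < v →
      K ρ v = v * Real.log (ρ * v / (1 - Real.exp (-(ρ * v)))) - ρ * v ^ 2 / 2) :
    (∀ r : ℝ, 0 < r → ∃ ρt : ℝ, 0 < ρt ∧
      ρt * u / (1 - Real.exp (-(ρt * u))) = 1 + r / u + ρt * u / 2 ∧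
      (∀ ρ : ℝ, 0 < ρ →
        K ρ u + r * Real.log (ρ / c) ≤ K ρt u + r * Real.log (ρt / c)) ∧
      (∀ ρ' : ℝ, 0 < ρ' →
        ρ' * u / (1 - Real.exp (-(ρ' * u))) = 1 + r / u + ρ' * u / 2 → ρ' = ρt)) ∧
    (IsLUB ((fun ρ => K ρ u) '' Set.Ioi (0 : ℝ)) 0 ∧
      Filter.Tendsto (fun ρ => K ρ u) (nhdsWithin 0 (Set.Ioi (0 : ℝ))) (nhds 0)) ∧
    (∀ rst : ℝ, rst = c * u ^ 2 / (1 - Real.exp (-(c * u))) - c * u ^ 2 / 2 - u →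
      0 ≤ rst ∧
      (∀ ρ : ℝ, 0 < ρ → K ρ u + rst * Real.log (ρ / c) ≤ K c u) ∧
      (∀ r : ℝ, 0 ≤ r → ∃ ρ : ℝ, 0 < ρ ∧ K c u ≤ K ρ u + r * Real.log (ρ / c)) ∧
      K c u + rst * Real.log (c / c) = K c u) := by
  obtain ⟨hu0, hu1⟩ := hu
  -- translation between the stationarity equation and `phiF`
  have stat_iff : ∀ ρ' t : ℝ, 0 < ρ' →
      (ρ' * u / (1 - Real.exp (-(ρ' * u))) = t + ρ' * u / 2 ↔ phiF (ρ' * u) = t) := by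
    intro ρ' t hρ'
    rw [phiF]
    constructor <;> intro h <;> linarith
  refine ⟨?_, ⟨?_, ?_⟩, ?_⟩
  · -- Part 1
    intro r hr
    have ht : 1 < 1 + r / u := by
      have : 0 < r / u := div_pos hr hu0
      linarith
    obtain ⟨x, hxpos, hphix⟩ := phiF_surj ht
    refine ⟨x / u, div_pos hxpos hu0, ?_, ?_, ?_⟩
    · rw [stat_iff _ _ (div_pos hxpos hu0), div_mul_cancel₀ _ hu0.ne']
      exact hphix
    · intro ρ hρ
      rw [hK ρ u hρ hu0, hK (x/u) u (div_pos hxpos hu0) hu0]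
      have hstat : phiF ((x/u) * u) = 1 + r / u := by
        rw [div_mul_cancel₀ _ hu0.ne']; exact hphix
      exact key_max hu0 hc (div_pos hxpos hu0) hstat hρ
    · intro ρ' hρ' heq
      rw [stat_iff _ _ hρ'] at heq
      have hx2 : phiF ((x/u) * u) = 1 + r / u := by
        rw [div_mul_cancel₀ _ hu0.ne']; exact hphix
      have := phiF_mono.injOn (Set.mem_Ioi.mpr (mul_pos hρ' hu0))
        (Set.mem_Ioi.mpr (mul_pos (div_pos hxpos hu0) hu0)) (by rw [heq, hx2])
      exact mul_right_cancel₀ hu0.ne' this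
  · -- IsLUB
    constructor
    · rintro y ⟨ρ, hρ, rfl⟩
      have hρ' : (0:ℝ) < ρ := hρ
      simp only
      rw [hK ρ u hρ' hu0]
      exact K_nonpos hu0 hρ'
    · intro b hb
      have hKt : Filter.Tendsto (fun ρ => K ρ u) (nhdsWithin 0 (Set.Ioi (0:ℝ))) (nhds 0) := by
        refine (K_tendsto hu0).congr' ?_
        filter_upwards [self_mem_nhdsWithin] with ρ hρ
        exact (hK ρ u hρ hu0).symm
      refine le_of_tendsto hKt ?_
      filter_upwards [self_mem_nhdsWithin] with ρ hρ
      exact hb ⟨ρ, hρ, rfl⟩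
  · -- Tendsto
    refine (K_tendsto hu0).congr' ?_
    filter_upwards [self_mem_nhdsWithin] with ρ hρ
    exact (hK ρ u hρ hu0).symm
  · -- Part 3
    intro rst hrst
    have hcu : 0 < c * u := mul_pos hc hu0
    have hE : 0 < 1 - Real.exp (-(c*u)) := expo_pos hcu
    have h0 : u * phiF (c*u) = c*u^2/(1 - Real.exp (-(c*u))) - c*u^2/2 := by
      rw [phiF]; field_simp
    have hrst' : rst = u * phiF (c*u) - u := by rw [h0]; linarith
    have hphic : phiF (c*u) = 1 + rst / u := by
      rw [hrst']; field_simp; ring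
    have hgt1 : 1 < phiF (c*u) := phiF_gt_one hcu
    refine ⟨by nlinarith, ?_, ?_, ?_⟩
    · intro ρ hρ
      have := key_max (r := rst) hu0 hc hc hphic hρ
      rw [div_self hc.ne', Real.log_one, mul_zero, add_zero] at this
      rw [hK ρ u hρ hu0, hK c u hc hu0]
      exact this
    · intro r hr
      exact ⟨c, hc, by rw [div_self hc.ne', Real.log_one, mul_zero, add_zero]⟩
    · rw [div_self hc.ne', Real.log_one, mul_zero, add_zero]
end
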